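/- arXiv:2306.12506 — 2 statements merged into one kernel-verified Lean document; each statement's English description precedes it below -/
import Mathlib

section
/- On skew fluctuating tableaux of length n with r rows: (i) ϖ commutes with each of P, E, and E*; (ii) τ ∘ P = P^{−1} ∘ τ and τ ∘ E = E* ∘ τ; (iii) ε ∘ P = P^{−1} ∘ ε and ε ∘ E = E* ∘ ε. -/
open scoped Classical

noncomputable section

namespace FT

/-- A (raw) `r`-row integer vector; generalized partitions are the antitone ones. -/
abbrev GP (r : ℕ) := Fin r → ℤ

/-- The weakly decreasing rearrangement of a tuple. -/
def sortDesc {r : ℕ} (α : GP r) : GP r := fun i => (α ∘ Tuple.sort α) i.rev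

/-- Standard basis vector (0-indexed). -/
def eV {r : ℕ} (a : Fin r) : GP r := fun i => if i = a then 1 else 0

/-- Standard basis vector with 1-indexed row `a` (zero if out of range). -/
def eN (r : ℕ) (a : ℕ) : GP r := fun i => if (i : ℕ) + 1 = a then 1 else 0

/-- Indicator vector of a set of rows. -/
def indV {r : ℕ} (S : Finset (Fin r)) : GP r := fun i => if i ∈ S then 1 else 0

/-- `colStep r c μ λ`: `λ` is obtained from `μ` by adding (if `c ≥ 0`) or removing
(if `c ≤ 0`) a skew column of `|c|` boxes. -/
def colStep (r : ℕ) (c : ℤ) (μ lam : GP r) : Prop :=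
  ∃ S : Finset (Fin r), S.card = c.natAbs ∧
    (if 0 ≤ c then lam = μ + indV S else lam = μ - indV S)

/-- Skew fluctuating tableau of length `n` and type `c` (recorded at indices `0,…,n`;
values of `T` and `c` beyond those indices are irrelevant). -/
def IsSkewFT (r n : ℕ) (T : ℕ → GP r) (c : ℕ → ℤ) : Prop :=
  (∀ k ≤ n, Antitone (T k)) ∧ ∀ j < n, colStep r (c j) (T j) (T (j + 1))

/-- (Non-skew) fluctuating tableau: starts at the empty shape. -/
def IsFT (r n : ℕ) (T : ℕ → GP r) (c : ℕ → ℤ) : Prop :=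
  IsSkewFT r n T c ∧ T 0 = 0

/-- Rectangular: the final shape is constant. -/
def Rect (r n : ℕ) (T : ℕ → GP r) : Prop := ∃ m : ℤ, ∀ i, T n i = m

/-- Bender–Knuth involution `BK_i` (for `1 ≤ i ≤ n-1`). -/
def BK {r : ℕ} (i : ℕ) (T : ℕ → GP r) : ℕ → GP r :=
  fun k => if k = i then sortDesc (T (i + 1) + T (i - 1) - T i) else T k

/-- `BKseg a m = BK (a+m-1) ∘ ⋯ ∘ BK a` (apply `BK a` first). -/
def BKseg {r : ℕ} (a : ℕ) : ℕ → (ℕ → GP r) → ℕ → GP r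
  | 0 => id
  | m + 1 => BK (a + m) ∘ BKseg a m

/-- Promotion `P = BK_{n-1} ∘ ⋯ ∘ BK_1` on length-`n` tableaux. -/
def promo {r : ℕ} (n : ℕ) (T : ℕ → GP r) : ℕ → GP r := BKseg 1 (n - 1) T

/-- `BKsegRev a m = BK a ∘ ⋯ ∘ BK (a+m-1)` (apply `BK (a+m-1)` first). -/
def BKsegRev {r : ℕ} (a : ℕ) : ℕ → (ℕ → GP r) → ℕ → GP r
  | 0 => id
  | m + 1 => BKsegRev a m ∘ BK (a + m)

/-- Inverse of promotion: `P⁻¹ = BK_1 ∘ ⋯ ∘ BK_{n-1}`. -/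
def promoInv {r : ℕ} (n : ℕ) (T : ℕ → GP r) : ℕ → GP r := BKsegRev 1 (n - 1) T

def evacAux {r : ℕ} : ℕ → (ℕ → GP r) → ℕ → GP r
  | 0, T => T
  | m + 1, T => evacAux m (BKseg 1 (m + 1) T)

/-- Evacuation `E = BK_1 ∘ (BK_2∘BK_1) ∘ ⋯ ∘ (BK_{n-1}∘⋯∘BK_1)`. -/
def evac {r : ℕ} (n : ℕ) (T : ℕ → GP r) : ℕ → GP r := evacAux (n - 1) T

def devacAux {r : ℕ} (n : ℕ) : ℕ → (ℕ → GP r) → ℕ → GP r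
  | 0, T => T
  | m + 1, T => BKseg (n - (m + 1)) (m + 1) (devacAux n m T)

/-- Dual evacuation `E* = (BK_{n-1}∘⋯∘BK_1) ∘ (BK_{n-1}∘⋯∘BK_2) ∘ ⋯ ∘ BK_{n-1}`. -/
def devac {r : ℕ} (n : ℕ) (T : ℕ → GP r) : ℕ → GP r := devacAux n (n - 1) T

/-- `rev(-v)`. -/
def revNeg {r : ℕ} (v : GP r) : GP r := fun i => - v i.rev

/-- Time reversal `τ`. -/
def tauT {r : ℕ} (n : ℕ) (T : ℕ → GP r) : ℕ → GP r := fun k => T (n - k)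

/-- `ϖ`. -/
def varpiT {r : ℕ} (T : ℕ → GP r) : ℕ → GP r := fun k => revNeg (T k)

/-- `ε`. -/
def epsT {r : ℕ} (n : ℕ) (T : ℕ → GP r) : ℕ → GP r := fun k => revNeg (T (n - k))

/-- Sign of the `j`-th step of `T` (paper indexing: step `j` goes from `λ^{j-1}` to `λ^j`). -/
def sgnStep {r : ℕ} (T : ℕ → GP r) (j : ℕ) : ℤ :=
  if T j = T (j - 1) then 0 else if T (j - 1) ≤ T j then 1 else -1

/-- The switch involution `toggle_j` (paper indexing, `1 ≤ j ≤ n`). -/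
def toggleT {r : ℕ} (j : ℕ) (T : ℕ → GP r) : ℕ → GP r :=
  fun m => if m < j then T m else fun i => T m i - sgnStep T j

/-- Number of boxes added/removed in the step from `T j` to `T (j+1)`. -/
def stepSize {r : ℕ} (T : ℕ → GP r) (j : ℕ) : ℕ :=
  (Finset.univ.filter fun i : Fin r => T (j + 1) i ≠ T j i).card

/-- Cumulative step sizes: position of `T j` inside the oscillization. -/
def cum {r : ℕ} (T : ℕ → GP r) (j : ℕ) : ℕ := ∑ j' ∈ Finset.range j, stepSize T j'

/-- The `j`-th intermediate shape of the oscillization of the skew-column step `μ → λ`: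
boxes are added smallest-row-first and removed largest-row-first. -/
def oscStep {r : ℕ} (μ lam : GP r) (j : ℕ) : GP r := fun i =>
  let S := Finset.univ.filter fun i' : Fin r => lam i' ≠ μ i'
  if i ∈ S ∧ (if μ i < lam i then (S.filter fun i' => i' ≤ i).card ≤ j
              else (S.filter fun i' => i ≤ i').card ≤ j)
  then lam i else μ i

/-- Largest index `j ≤ n` with `cum T j ≤ k`. -/
def stdIdx {r : ℕ} (n : ℕ) (T : ℕ → GP r) (k : ℕ) : ℕ :=
  ((Finset.range (n + 1)).filter fun j => cum T j ≤ k).sup id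

/-- The oscillization `std(T)` of a length-`n` tableau, a tableau of length `t = Σ|c_j|`. -/
def stdT {r : ℕ} (n : ℕ) (T : ℕ → GP r) : ℕ → GP r := fun k =>
  if stdIdx n T k = n then T n
  else oscStep (T (stdIdx n T k)) (T (stdIdx n T k + 1)) (k - cum T (stdIdx n T k))

/-- Rows of the promotion–evacuation growth diagram: `PE t S u` is `P^u(S)`
for a length-`t` (oscillating) tableau `S`. -/
def PE {r : ℕ} (t : ℕ) (S : ℕ → GP r) (u : ℕ) : ℕ → GP r := (promo t)^[u] S

/-- `i ∈ {1,…,r-1}` is recorded at cell `(u,v)` of the growth diagram of `S`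
(rows 1-indexed; `λ^{u,v} = P^u(S)(v-u)`). -/
def recorded (r t : ℕ) (S : ℕ → GP r) (i u v : ℕ) : Prop :=
  ∃ a b : Fin r,
    (PE t S (u - 1) (v - u) = PE t S u (v - u - 1) + eV a ∧
     PE t S (u - 1) (v - u + 1) = PE t S u (v - u) + eV b ∧
     (a : ℕ) < i ∧ i ≤ (b : ℕ))
    ∨
    (PE t S u (v - u - 1) = PE t S (u - 1) (v - u) + eV a ∧
     PE t S u (v - u) = PE t S (u - 1) (v - u + 1) + eV b ∧
     (b : ℕ) < i ∧ i ≤ (a : ℕ))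

/-- `i ∈ PM(T)_{u,v}` for an off-diagonal entry of the promotion matrix of `T`
(`u, v ∈ {1,…,t}`, `1 ≤ i ≤ r-1`), using the oscillization `std(T)`. -/
def PMmem (r n t : ℕ) (T : ℕ → GP r) (i u v : ℕ) : Prop :=
  1 ≤ u ∧ u ≤ t ∧ 1 ≤ v ∧ v ≤ t ∧ u ≠ v ∧ 1 ≤ i ∧ i ≤ r - 1 ∧
    recorded r t (stdT n T) i u (if u < v then v else v + t)

/-- Graph of the partial promotion function `prom_i(T)`: `prom_i(T)(u) = v`.
By convention `prom_0 = prom_r = id` on `{1,…,t}`. -/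
def promRel (r n t : ℕ) (T : ℕ → GP r) (i u v : ℕ) : Prop :=
  if i = 0 ∨ i = r then 1 ≤ u ∧ u ≤ t ∧ u = v else PMmem r n t T i u v

/-- Sum of the first `i` entries (1-indexed prefix sums). -/
def pSum {r : ℕ} (v : GP r) (i : ℕ) : ℤ :=
  ∑ j ∈ Finset.univ.filter (fun j : Fin r => (j : ℕ) < i), v j

/-- The filled oscillized local-rule grid: row index `k` counts down from the top row
(`k = 0` is `std(λ → ν)`), column index `q` goes right; the left column is
`std(κ → λ)` read so that `grid cA κ λ ν k 0 = std(κ→λ)` at position `cA - k`. -/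
def grid {r : ℕ} (cA : ℕ) (κ lam ν : GP r) : ℕ → ℕ → GP r
  | 0, q => oscStep lam ν q
  | k + 1, 0 => oscStep κ lam (cA - (k + 1))
  | k + 1, q + 1 =>
      sortDesc (grid cA κ lam ν k (q + 1) + grid cA κ lam ν (k + 1) q -
        grid cA κ lam ν k q)
  termination_by k q => (k, q)

/-- 1-indexed entry of a vector (0 if out of range). -/
def ent {r : ℕ} (v : GP r) (h : ℕ) : ℤ := if hh : h - 1 < r then v ⟨h - 1, hh⟩ else 0

/-- The chain `j_0 = 1, j_h = ` least `h`-balance point of the lattice word of `T`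
weakly after `j_{h-1}` (in `{1,…,n}`), `none` once undefined. An index `j` is an
`h`-balance point iff `(T j)_h = (T j)_{h+1}` (1-indexed rows). -/
def jChain (r n : ℕ) (T : ℕ → GP r) : ℕ → Option ℕ
  | 0 => some 1
  | h + 1 =>
    match jChain r n T h with
    | none => none
    | some jp =>
      if H : ∃ j, jp ≤ j ∧ j ≤ n ∧ ent (T j) (h + 1) = ent (T j) (h + 2) then
        some (Nat.find H)
      else none

/-- `k`: the largest `h ≤ r-1` such that `j_1, …, j_h` are all defined. -/
def kVal (r n : ℕ) (T : ℕ → GP r) : ℕ :=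
  ((Finset.range r).filter fun h => (jChain r n T h).isSome).sup id

/-- `j_h`, defaulting to `0` when undefined. -/
def jval (r n : ℕ) (T : ℕ → GP r) (h : ℕ) : ℕ := (jChain r n T h).getD 0

/-- `ω_c` for `c ∈ {0,±1,…,±r}`: top-justified column of `c` ones if `c ≥ 0`,
bottom-justified column of `|c|` minus-ones if `c < 0`. -/
def omegaGP (r : ℕ) (c : ℤ) : GP r := fun i =>
  if 0 ≤ c then (if (i : ℕ) < c.natAbs then 1 else 0)
  else (if r - c.natAbs ≤ (i : ℕ) then -1 else 0)

/-- The extremal fluctuating tableau of type `c`: partial sums of the `ω_{c_j}`. -/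
def extremal (r : ℕ) (c : ℕ → ℤ) (k : ℕ) : GP r := ∑ j ∈ Finset.range k, omegaGP r (c j)

/-- Lexicographic order: the first nonzero entry of `β - α` is positive. -/
def ltLex {r : ℕ} (α β : GP r) : Prop := ∃ i : Fin r, (∀ j, j < i → α j = β j) ∧ α i < β i

/-- Cumulative sums of `|c_j|` (block boundaries). -/
def cumC (c : ℕ → ℤ) (j : ℕ) : ℕ := ∑ j' ∈ Finset.range j, (c j').natAbs

/-- Entry `(u,v)` (for `u,v ∈ {1,…,n}`) of the reduced promotion matrix `PMr^i(T)`: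
the number of cells in the block `B_u × B_v` whose promotion-matrix entry contains `i`. -/
def PMr (r n t : ℕ) (T : ℕ → GP r) (c : ℕ → ℤ) (i u v : ℕ) : ℕ :=
  (((Finset.Icc (cumC c (u - 1) + 1) (cumC c u)) ×ˢ
    (Finset.Icc (cumC c (v - 1) + 1) (cumC c v))).filter
      fun p => PMmem r n t T i p.1 p.2).card

/-- The set of `r`-row fluctuating tableaux of length `n`, shape `lam`, type `c`,
in bundled (finitely-indexed) form. -/
def FTset (r n : ℕ) (lam : GP r) (c : Fin n → ℤ) : Set (Fin (n + 1) → GP r) :=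
  {T | (∀ k, Antitone (T k)) ∧ T 0 = 0 ∧ T (Fin.last n) = lam ∧
       ∀ j : Fin n, colStep r (c j) (T j.castSucc) (T j.succ)}



section Aux

variable {r : ℕ}

lemma sortDesc_revNeg (v : GP r) : sortDesc (revNeg v) = revNeg (sortDesc v) := by
  set f : GP r := revNeg v with hf
  set σ : Equiv.Perm (Fin r) :=
    Fin.revPerm.trans ((Tuple.sort v).trans Fin.revPerm) with hσ
  have e : ∀ k : Fin r, (f ∘ σ) k = - (v ∘ Tuple.sort v) (Fin.rev k) := by
    intro k
    simp [hf, hσ, revNeg, Fin.rev_rev, Function.comp]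
  have hmono : Monotone (f ∘ σ) := by
    intro i j hij
    rw [e i, e j]
    exact neg_le_neg (Tuple.monotone_sort v (Fin.rev_le_rev.mpr hij))
  have h := Tuple.unique_monotone hmono (Tuple.monotone_sort f)
  funext i
  have h2 := congrFun h (Fin.rev i)
  have hL : (f ∘ Tuple.sort f) (Fin.rev i) = sortDesc f i := rfl
  have hR : (f ∘ σ) (Fin.rev i) = revNeg (sortDesc v) i := by
    rw [e (Fin.rev i)]
    simp [revNeg, sortDesc, Fin.rev_rev, Function.comp]
  rw [hL, hR] at h2
  exact h2.symm

lemma revNeg_comb (a b c : GP r) :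
    revNeg (a + b - c) = revNeg a + revNeg b - revNeg c := by
  funext i
  simp only [revNeg, Pi.add_apply, Pi.sub_apply]
  ring

lemma varpi_BK (i : ℕ) (T : ℕ → GP r) : varpiT (BK i T) = BK i (varpiT T) := by
  funext k
  simp only [varpiT, BK]
  by_cases hk : k = i
  · rw [if_pos hk, if_pos hk, ← revNeg_comb, ← sortDesc_revNeg]
  · rw [if_neg hk, if_neg hk]

lemma BK_ne (i k : ℕ) (T : ℕ → GP r) (h : k ≠ i) : BK i T k = T k := by
  simp [BK, h]

lemma BK_comm (i j : ℕ) (T : ℕ → GP r) (h : i + 2 ≤ j) :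
    BK i (BK j T) = BK j (BK i T) := by
  funext k
  by_cases hki : k = i
  · subst hki
    rw [BK_ne j k _ (by omega), show BK k (BK j T) k = sortDesc
        (BK j T (k+1) + BK j T (k-1) - BK j T k) from if_pos rfl,
      BK_ne j (k+1) T (by omega), BK_ne j (k-1) T (by omega),
      BK_ne j k T (by omega)]
    exact (if_pos rfl).symm
  · by_cases hkj : k = j
    · subst hkj
      rw [BK_ne i k _ (by omega), show BK k (BK i T) k = sortDesc
          (BK i T (k+1) + BK i T (k-1) - BK i T k) from if_pos rfl,
        BK_ne i (k+1) T (by omega), BK_ne i (k-1) T (by omega),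
        BK_ne i k T (by omega)]
      exact if_pos rfl
    · rw [BK_ne i k _ hki, BK_ne j k _ hkj, BK_ne j k _ hkj, BK_ne i k _ hki]

lemma BKseg_succ (a m : ℕ) (T : ℕ → GP r) :
    BKseg a (m + 1) T = BK (a + m) (BKseg a m T) := rfl

lemma BKsegRev_succ (a m : ℕ) (T : ℕ → GP r) :
    BKsegRev a (m + 1) T = BKsegRev a m (BK (a + m) T) := rfl

lemma BKseg_succ' (a m : ℕ) (T : ℕ → GP r) :
    BKseg a (m + 1) T = BKseg (a + 1) m (BK a T) := by
  induction m generalizing T with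
  | zero => rfl
  | succ m ih =>
      rw [BKseg_succ a (m+1), show a + (m+1) = (a+1)+m from by omega, ih,
        BKseg_succ (a+1) m]

lemma BKsegRev_succ' (a m : ℕ) (T : ℕ → GP r) :
    BKsegRev a (m + 1) T = BK a (BKsegRev (a + 1) m T) := by
  induction m generalizing T with
  | zero => rfl
  | succ m ih =>
      rw [BKsegRev_succ a (m+1), show a + (m+1) = (a+1)+m from by omega, ih,
        BKsegRev_succ (a+1) m]

lemma BK_comm_seg (p a m : ℕ) (T : ℕ → GP r) (h : p + 2 ≤ a) :
    BK p (BKseg a m T) = BKseg a m (BK p T) := by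
  induction m generalizing T with
  | zero => rfl
  | succ m ih =>
      rw [BKseg_succ, BKseg_succ, BK_comm p (a+m) _ (by omega), ih]

lemma BK_comm_devacAux (n p m : ℕ) (T : ℕ → GP r) (h : p + 2 ≤ n - m) :
    BK p (devacAux n m T) = devacAux n m (BK p T) := by
  induction m generalizing T with
  | zero => rfl
  | succ m ih =>
      show BK p (BKseg (n - (m+1)) (m+1) (devacAux n m T)) = _
      rw [BK_comm_seg p _ _ _ (by omega), ih _ (by omega)]
      rfl

lemma tau_BK (n i : ℕ) (T : ℕ → GP r) (h1 : 1 ≤ i) (h2 : i + 1 ≤ n) :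
    tauT n (BK i T) = BK (n - i) (tauT n T) := by
  funext k
  simp only [tauT, BK]
  have e1 : n - (n - i + 1) = i - 1 := by omega
  have e2 : n - (n - i - 1) = i + 1 := by omega
  have e3 : n - (n - i) = i := by omega
  rw [e1, e2, e3]
  by_cases hk : n - k = i
  · rw [if_pos hk, if_pos (by omega : k = n - i), add_comm (T (i+1)) (T (i-1))]
  · rw [if_neg hk, if_neg (by omega : ¬ k = n - i)]

lemma tau_BKseg (n a m : ℕ) (T : ℕ → GP r) (h1 : 1 ≤ a) (h2 : a + m ≤ n) :
    tauT n (BKseg a m T) = BKsegRev (n - a - m + 1) m (tauT n T) := by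
  induction m generalizing T with
  | zero => rfl
  | succ m ih =>
      have e1 : n - a - (m+1) + 1 = n - (a + m) := by omega
      have e2 : n - a - (m+1) + 1 + 1 = n - a - m + 1 := by omega
      rw [BKseg_succ, tau_BK n (a+m) _ (by omega) (by omega), ih _ (by omega),
        BKsegRev_succ' (n - a - (m+1) + 1) m, e1,
        show n - (a + m) + 1 = n - a - m + 1 from by omega]

lemma Llem (n m : ℕ) (T : ℕ → GP r) (h : m + 1 ≤ n) :
    devacAux n m (BKsegRev (n - 1 - m) (m + 1) T) =
      BKseg (n - 1 - m) (m + 1) (devacAux n m T) := by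
  induction m generalizing T with
  | zero => rfl
  | succ m ih =>
      have hp : n - 1 - (m + 1) + 1 = n - 1 - m := by omega
      have hq : n - (m + 1) = n - 1 - m := by omega
      calc devacAux n (m+1) (BKsegRev (n-1-(m+1)) (m+2) T)
          = BKseg (n - (m+1)) (m+1)
              (devacAux n m (BK (n-1-(m+1)) (BKsegRev (n-1-m) (m+1) T))) := by
            rw [BKsegRev_succ' (n-1-(m+1)) (m+1), hp]
            rfl
        _ = BKseg (n - (m+1)) (m+1)
              (BK (n-1-(m+1)) (devacAux n m (BKsegRev (n-1-m) (m+1) T))) := by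
            rw [BK_comm_devacAux n _ m _ (by omega)]
        _ = BKseg (n - (m+1)) (m+1)
              (BK (n-1-(m+1)) (BKseg (n-1-m) (m+1) (devacAux n m T))) := by
            rw [ih _ (by omega)]
        _ = BKseg (n-1-(m+1)) (m+2) (devacAux n (m+1) T) := by
            rw [BKseg_succ' (n-1-(m+1)) (m+1), hp,
              show devacAux n (m+1) T = BKseg (n - (m+1)) (m+1) (devacAux n m T)
                from rfl, hq]

lemma tau_evacAux (n m : ℕ) (T : ℕ → GP r) (h : m + 1 ≤ n) :
    tauT n (evacAux m T) = devacAux n m (tauT n T) := by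
  induction m generalizing T with
  | zero => rfl
  | succ m ih =>
      show tauT n (evacAux m (BKseg 1 (m+1) T)) = _
      rw [ih _ (by omega), tau_BKseg n 1 (m+1) T (by omega) (by omega),
        show n - 1 - (m+1) + 1 = n - 1 - m from by omega,
        Llem n m _ (by omega),
        show devacAux n (m+1) (tauT n T) =
          BKseg (n - (m+1)) (m+1) (devacAux n m (tauT n T)) from rfl,
        show n - (m+1) = n - 1 - m from by omega]

lemma varpi_BKseg (a m : ℕ) (T : ℕ → GP r) :
    varpiT (BKseg a m T) = BKseg a m (varpiT T) := by
  induction m generalizing T with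
  | zero => rfl
  | succ m ih => rw [BKseg_succ, BKseg_succ, varpi_BK, ih]

lemma varpi_BKsegRev (a m : ℕ) (T : ℕ → GP r) :
    varpiT (BKsegRev a m T) = BKsegRev a m (varpiT T) := by
  induction m generalizing T with
  | zero => rfl
  | succ m ih => rw [BKsegRev_succ, BKsegRev_succ, ih, varpi_BK]

lemma varpi_evacAux (m : ℕ) (T : ℕ → GP r) :
    varpiT (evacAux m T) = evacAux m (varpiT T) := by
  induction m generalizing T with
  | zero => rfl
  | succ m ih =>
      show varpiT (evacAux m (BKseg 1 (m+1) T)) = evacAux m (BKseg 1 (m+1) (varpiT T))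
      rw [ih, varpi_BKseg]

lemma varpi_devacAux (n m : ℕ) (T : ℕ → GP r) :
    varpiT (devacAux n m T) = devacAux n m (varpiT T) := by
  induction m generalizing T with
  | zero => rfl
  | succ m ih =>
      show varpiT (BKseg (n-(m+1)) (m+1) (devacAux n m T)) = _
      rw [varpi_BKseg, ih]
      rfl

lemma eps_eq (n : ℕ) (T : ℕ → GP r) : epsT n T = varpiT (tauT n T) := rfl

end Aux

/-- **Lemma.** On length-`n` skew fluctuating tableaux with `r` rows:
(i) `ϖ` commutes with each of `P`, `E`, `E*`;
(ii) `τ ∘ P = P⁻¹ ∘ τ` and `τ ∘ E = E* ∘ τ`;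
(iii) `ε ∘ P = P⁻¹ ∘ ε` and `ε ∘ E = E* ∘ ε`. -/
theorem involutions_vs_promotion_evacuation
    (r n : ℕ) (T : ℕ → GP r) (c : ℕ → ℤ) (hT : IsSkewFT r n T c) :
    (varpiT (promo n T) = promo n (varpiT T) ∧
     varpiT (evac n T) = evac n (varpiT T) ∧
     varpiT (devac n T) = devac n (varpiT T)) ∧
    (tauT n (promo n T) = promoInv n (tauT n T) ∧
     tauT n (evac n T) = devac n (tauT n T)) ∧
    (epsT n (promo n T) = promoInv n (epsT n T) ∧
     epsT n (evac n T) = devac n (epsT n T)) := by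
  refine ⟨⟨?_, ?_, ?_⟩, ⟨?_, ?_⟩, ⟨?_, ?_⟩⟩
  · exact varpi_BKseg 1 (n-1) T
  · exact varpi_evacAux (n-1) T
  · exact varpi_devacAux n (n-1) T
  · -- tau promo
    rcases Nat.eq_zero_or_pos n with hn | hn
    · subst hn; rfl
    · have := tau_BKseg n 1 (n-1) T (by omega) (by omega)
      rw [show n - 1 - (n-1) + 1 = 1 from by omega] at this
      exact this
  · -- tau evac
    rcases Nat.eq_zero_or_pos n with hn | hn
    · subst hn; rfl
    · exact tau_evacAux n (n-1) T (by omega)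
  · -- eps promo
    rw [eps_eq, eps_eq]
    rcases Nat.eq_zero_or_pos n with hn | hn
    · subst hn; rfl
    · have h1 := tau_BKseg n 1 (n-1) T (by omega) (by omega)
      rw [show n - 1 - (n-1) + 1 = 1 from by omega] at h1
      show varpiT (tauT n (BKseg 1 (n-1) T)) = BKsegRev 1 (n-1) (varpiT (tauT n T))
      rw [h1, varpi_BKsegRev]
  · -- eps evac
    rw [eps_eq, eps_eq]
    rcases Nat.eq_zero_or_pos n with hn | hn
    · subst hn; rfl
    · show varpiT (tauT n (evacAux (n-1) T)) = devacAux n (n-1) (varpiT (tauT n T))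
      rw [tau_evacAux n (n-1) T (by omega), varpi_devacAux]

end FT
end
end

section
/- Let κ →^c λ →^d ν be skew-column steps of r-row generalized partitions and set μ := sort(ν + κ − λ). Consider the array of generalized partitions λ^{p,q} for 0 ≤ p ≤ |c| and 0 ≤ q ≤ |d| determined as follows: the left column (λ^{p,0})_{p=0}^{|c|} is std(κ → λ) (so λ^{0,0} = κ and λ^{|c|,0} = λ), the top row (λ^{|c|,q})_{q=0}^{|d|} is std(λ → ν), and λ^{p,q} := sort(λ^{p+1,q} + λ^{p,q−1} − λ^{p+1,q−1}) for p = |c|−1 down to 0 and q = 1,…,|d|. Then the bottom row (λ^{0,q})_{q=0}^{|d|} equals std(κ → μ) and the right column (λ^{p,|d|})_{p=0}^{|c|} equals std(μ → ν); in particular λ^{0,|d|} = μ. -/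
open scoped Classical

noncomputable section

namespace FT

section AuxOsc

variable {r : ℕ}

/-- bump vector -/
def bp (ε : ℤ) (u : Fin r) : GP r := fun i => if i = u then ε else 0

lemma sortDesc_perm (v : GP r) (σ : Equiv.Perm (Fin r)) : sortDesc (v ∘ σ) = sortDesc v := by
  funext i
  simp only [sortDesc]
  rw [Tuple.comp_perm_comp_sort_eq_comp_sort]

lemma antitone_sortDesc (v : GP r) : Antitone (sortDesc v) := by
  intro i j hij
  exact Tuple.monotone_sort v (Fin.rev_le_rev.mpr hij)

lemma sortDesc_eq_self {v : GP r} (hv : Antitone v) : sortDesc v = v := by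
  have hm : Monotone (v ∘ (Fin.revPerm : Equiv.Perm (Fin r))) := by
    intro a b hab
    exact hv (Fin.rev_le_rev.mpr hab)
  have := Tuple.comp_sort_eq_comp_iff_monotone.mpr hm
  funext i
  have h2 := congrFun this i.rev
  simp only [Function.comp_apply, Equiv.coe_refl] at h2 ⊢
  simpa only [sortDesc, Function.comp_apply, Fin.revPerm_apply, Fin.rev_rev] using h2.symm

lemma exists_perm_sortDesc (v : GP r) : ∃ σ : Equiv.Perm (Fin r), sortDesc v = v ∘ σ :=
  ⟨Fin.revPerm.trans (Tuple.sort v), by funext i; simp [sortDesc]⟩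

/-- number of entries strictly greater than t -/
def cntGT (v : GP r) (t : ℤ) : ℕ := (Finset.univ.filter fun i => t < v i).card

lemma cntGT_perm (v : GP r) (σ : Equiv.Perm (Fin r)) (t : ℤ) : cntGT (v ∘ σ) t = cntGT v t := by
  unfold cntGT
  apply Finset.card_bij (fun a _ => σ a)
  · intro a ha; simp only [Finset.mem_filter, Finset.mem_univ, true_and] at ha ⊢; exact ha
  · intro a _ b _ h; exact σ.injective h
  · intro b hb
    refine ⟨σ.symm b, ?_, by simp⟩
    simp only [Finset.mem_filter, Finset.mem_univ, true_and, Function.comp_apply,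
      Equiv.apply_symm_apply] at hb ⊢
    exact hb

lemma cntGT_mono (v : GP r) {s t : ℤ} (h : s ≤ t) : cntGT v t ≤ cntGT v s := by
  apply Finset.card_le_card
  intro i hi
  simp only [Finset.mem_filter, Finset.mem_univ, true_and] at hi ⊢
  omega

/-- key: for antitone B, `B i > t ↔ i < cntGT B t`. -/
lemma antitone_gt_iff {B : GP r} (hB : Antitone B) (t : ℤ) (i : Fin r) :
    t < B i ↔ (i : ℕ) < cntGT B t := by
  constructor
  · intro h
    unfold cntGT
    have hsub : Finset.Iic i ⊆ Finset.univ.filter fun j => t < B j := by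
      intro j hj
      simp only [Finset.mem_Iic] at hj
      simp only [Finset.mem_filter, Finset.mem_univ, true_and]
      exact lt_of_lt_of_le h (hB hj)
    have := Finset.card_le_card hsub
    rw [Fin.card_Iic] at this
    omega
  · unfold cntGT
    intro h
    by_contra hc
    push_neg at hc
    have hsub : (Finset.univ.filter fun j => t < B j) ⊆ Finset.Iio i := by
      intro j hj
      simp only [Finset.mem_filter, Finset.mem_univ, true_and] at hj
      simp only [Finset.mem_Iio]
      by_contra hji
      push_neg at hji
      exact absurd (lt_of_lt_of_le hj (hB hji)) (not_lt.mpr hc)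
    have := Finset.card_le_card hsub
    rw [Fin.card_Iio] at this
    omega

lemma cntGT_sortDesc (v : GP r) (t : ℤ) : cntGT (sortDesc v) t = cntGT v t := by
  obtain ⟨σ, hσ⟩ := exists_perm_sortDesc v
  rw [hσ, cntGT_perm]

/-- value of sorted vector in the window -/
lemma sortDesc_val (v : GP r) (t : ℤ) (j : Fin r)
    (h1 : cntGT v t ≤ (j : ℕ)) (h2 : (j : ℕ) < cntGT v (t - 1)) : sortDesc v j = t := by
  have hB := antitone_sortDesc v
  have a1 := (antitone_gt_iff hB t j).not.mpr (by rw [cntGT_sortDesc]; omega)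
  have a2 := (antitone_gt_iff hB (t - 1) j).mpr (by rw [cntGT_sortDesc]; omega)
  omega

/-- cnt at t-1 counts also equalities -/
lemma cntGT_pred (v : GP r) (t : ℤ) :
    cntGT v (t - 1) = cntGT v t + (Finset.univ.filter fun i => v i = t).card := by
  unfold cntGT
  rw [← Finset.card_union_of_disjoint]
  · congr 1
    ext i
    simp only [Finset.mem_union, Finset.mem_filter, Finset.mem_univ, true_and]
    omega
  · rw [Finset.disjoint_filter]
    intro i _ h
    omega

lemma cntGT_lt (v : GP r) (u : Fin r) : cntGT v (v u) < r := by
  have : (Finset.univ.filter fun i => v u < v i) ⊆ Finset.univ.erase u := by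
    intro i hi
    simp only [Finset.mem_filter, Finset.mem_univ, true_and] at hi
    simp only [Finset.mem_erase, Finset.mem_univ, and_true]
    intro h; rw [h] at hi; omega
  have := Finset.card_le_card this
  rw [Finset.card_erase_of_mem (Finset.mem_univ u), Finset.card_univ, Fintype.card_fin] at this
  have hr : 0 < r := u.pos
  unfold cntGT
  omega

lemma cntGT_self_lt_pred (v : GP r) (u : Fin r) : cntGT v (v u) < cntGT v (v u - 1) := by
  rw [cntGT_pred]
  have : u ∈ Finset.univ.filter fun i => v i = v u := by simp
  have := Finset.card_pos.mpr ⟨u, this⟩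
  omega


def jPos (ε : ℤ) (w : GP r) (u : Fin r) : ℕ :=
  if ε = 1 then cntGT w (w u) else cntGT w (w u - 1) - 1

lemma jPos_window {ε : ℤ} (w : GP r) (u : Fin r) :
    cntGT w (w u) ≤ jPos ε w u ∧ jPos ε w u < cntGT w (w u - 1) := by
  have h := cntGT_self_lt_pred w u
  unfold jPos
  split <;> omega

lemma jPos_lt {ε : ℤ} (w : GP r) (u : Fin r) : jPos ε w u < r := by
  have h1 := cntGT_lt w u
  have h2 : cntGT w (w u - 1) ≤ r := by
    have := Finset.card_le_card (Finset.subset_univ (Finset.univ.filter fun i => w u - 1 < w i))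
    rw [Finset.card_univ, Fintype.card_fin] at this
    unfold cntGT; omega
  have h := cntGT_self_lt_pred w u
  unfold jPos; split <;> omega

lemma swap_bp {ε : ℤ} {w : GP r} {u y : Fin r} (hwy : w y = w u) :
    (fun i => w i + bp ε y i) ∘ (Equiv.swap u y) = fun i => w i + bp ε u i := by
  funext i
  simp only [Function.comp_apply, bp]
  rcases eq_or_ne i u with rfl | hiu
  · rw [Equiv.swap_apply_left, hwy]
    simp
  · rcases eq_or_ne i y with rfl | hiy
    · rw [Equiv.swap_apply_right, hwy, if_neg (fun hh => hiu hh.symm), if_neg hiu]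
    · rw [Equiv.swap_apply_of_ne_of_ne hiu hiy, if_neg hiy, if_neg hiu]

lemma sortStep {ε : ℤ} (hε : ε = 1 ∨ ε = -1) (w : GP r) (u : Fin r) :
    sortDesc (fun i => w i + bp ε u i)
      = fun i => sortDesc w i + bp ε ⟨jPos ε w u, jPos_lt w u⟩ i := by
  obtain ⟨σ, hσ⟩ := exists_perm_sortDesc w
  have hBanti : Antitone (sortDesc w) := antitone_sortDesc w
  have hwin := jPos_window (ε := ε) w u
  have hcnt : ∀ t, cntGT (sortDesc w) t = cntGT w t := cntGT_sortDesc w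
  set jf : Fin r := ⟨jPos ε w u, jPos_lt w u⟩ with hjf
  have hjfv : (jf : ℕ) = jPos ε w u := rfl
  have hval : sortDesc w jf = w u := sortDesc_val w (w u) jf hwin.1 (by omega)
  set y : Fin r := σ jf with hy
  have hwy : w y = w u := by rw [hy, ← hval, hσ]; rfl
  have hanti : Antitone (fun i => sortDesc w i + bp ε jf i) := by
    intro a b hab
    have hBa : sortDesc w b ≤ sortDesc w a := hBanti hab
    simp only [bp]
    by_cases ha : a = jf
    · by_cases hb : b = jf
      · rw [ha, hb]
      · rw [if_pos ha, if_neg hb]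
        rcases hε with rfl | rfl
        · omega
        · -- ε = -1 : b is strictly after jf, so sortDesc w b ≤ w u - 1
          have hav : sortDesc w a = w u := ha ▸ hval
          have hblt : (jf : ℕ) < (b : ℕ) := by
            have : a < b := lt_of_le_of_ne hab (fun h => hb (h ▸ ha))
            rw [← ha]; exact this
          have hjv : jPos (-1 : ℤ) w u = cntGT w (w u - 1) - 1 := by unfold jPos; norm_num
          have hble : sortDesc w b ≤ w u - 1 := by
            have := (antitone_gt_iff hBanti (w u - 1) b).not.mpr (by rw [hcnt]; omega)
            omega
          omega
    · by_cases hb : b = jf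
      · rw [if_neg ha, if_pos hb]
        rcases hε with rfl | rfl
        · -- ε = 1 : a is strictly before jf, so sortDesc w a ≥ w u + 1
          have hbv : sortDesc w b = w u := hb ▸ hval
          have halt : (a : ℕ) < (jf : ℕ) := by
            have : a < b := lt_of_le_of_ne hab (fun h => ha (h ▸ hb))
            rw [← hb]; exact this
          have hjv : jPos (1 : ℤ) w u = cntGT w (w u) := by unfold jPos; norm_num
          have hage : w u + 1 ≤ sortDesc w a := by
            have := (antitone_gt_iff hBanti (w u) a).mpr (by rw [hcnt]; omega)
            omega
          omega
        · omega
      · rw [if_neg ha, if_neg hb]; omega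
  have hre : (fun i => sortDesc w i + bp ε jf i) ∘ ((Equiv.swap u y).trans σ.symm)
      = fun i => w i + bp ε u i := by
    have step1 : (fun i => sortDesc w i + bp ε jf i) ∘ ⇑σ.symm
        = fun i => w i + bp ε y i := by
      funext i
      simp only [Function.comp_apply, bp]
      have h1 : sortDesc w (σ.symm i) = w i := by rw [hσ]; simp
      have h2 : (σ.symm i = jf) ↔ (i = y) := by
        rw [hy]; constructor
        · intro h; rw [← h]; simp
        · intro h; rw [h]; simp
      rw [h1]
      by_cases h : i = y
      · rw [if_pos (h2.mpr h), if_pos h]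
      · rw [if_neg (fun hh => h (h2.mp hh)), if_neg h]
    have hsplit : (fun i => sortDesc w i + bp ε jf i) ∘ ⇑((Equiv.swap u y).trans σ.symm)
        = ((fun i => sortDesc w i + bp ε jf i) ∘ ⇑σ.symm) ∘ ⇑(Equiv.swap u y) := rfl
    rw [hsplit, step1, swap_bp hwy]
  calc sortDesc (fun i => w i + bp ε u i)
      = sortDesc ((fun i => sortDesc w i + bp ε jf i) ∘ ((Equiv.swap u y).trans σ.symm)) := by
        rw [hre]
    _ = sortDesc (fun i => sortDesc w i + bp ε jf i) := sortDesc_perm _ _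
    _ = fun i => sortDesc w i + bp ε jf i := sortDesc_eq_self hanti


section Chain

variable {ε : ℤ} {m : ℕ} {uf : ℕ → Fin r} {base : GP r}

/-- the chain vectors -/
def chv (ε : ℤ) (uf : ℕ → Fin r) (base : GP r) (q : ℕ) : GP r :=
  fun i => base i + ε * ∑ l ∈ Finset.range q, (if i = uf l then 1 else 0)

lemma chv_succ (q : ℕ) :
    chv ε uf base (q + 1) = fun i => chv ε uf base q i + bp ε (uf q) i := by
  funext i
  simp only [chv, Finset.sum_range_succ, bp]
  by_cases h : i = uf q <;> simp [h] <;> ring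

lemma chv_self (hε : ε = 1 ∨ ε = -1) {q : ℕ} (hq : q < m)
    (hmono : ∀ a b, a < b → b < m → (ε = 1 → uf a < uf b) ∧ (ε = -1 → uf b < uf a)) :
    chv ε uf base q (uf q) = base (uf q) := by
  have : ∀ l ∈ Finset.range q, (if uf q = uf l then (1:ℤ) else 0) = 0 := by
    intro l hl
    rw [Finset.mem_range] at hl
    have h2 := hmono l q hl hq
    rw [if_neg]
    intro h
    rcases hε with rfl | rfl
    · exact absurd h.symm (ne_of_lt (h2.1 rfl))
    · exact absurd h (ne_of_lt (h2.2 rfl))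
  simp only [chv, Finset.sum_congr rfl this, Finset.sum_const_zero, mul_zero, add_zero]

/-- positions where the sorted chain grows -/
def jseq (ε : ℤ) (uf : ℕ → Fin r) (base : GP r) (l : ℕ) : Fin r :=
  ⟨jPos ε (chv ε uf base l) (uf l), jPos_lt _ _⟩

lemma chain_step (hε : ε = 1 ∨ ε = -1) (l : ℕ) :
    sortDesc (chv ε uf base (l + 1))
      = fun i => sortDesc (chv ε uf base l) i + bp ε (jseq ε uf base l) i := by
  rw [chv_succ]
  exact sortStep hε _ _

lemma chain_sorted_val (hε : ε = 1 ∨ ε = -1) {l : ℕ} (hl : l < m)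
    (hmono : ∀ a b, a < b → b < m → (ε = 1 → uf a < uf b) ∧ (ε = -1 → uf b < uf a)) :
    sortDesc (chv ε uf base l) (jseq ε uf base l) = base (uf l) := by
  rw [← chv_self (base := base) hε hl hmono]
  have hwin := jPos_window (ε := ε) (chv ε uf base l) (uf l)
  exact sortDesc_val _ _ _ hwin.1 hwin.2

lemma chain_adj (hε : ε = 1 ∨ ε = -1) {l : ℕ} (hl : l + 1 < m)
    (hmono : ∀ a b, a < b → b < m → (ε = 1 → uf a < uf b) ∧ (ε = -1 → uf b < uf a))
    (hvals : ∀ a b, a ≤ b → b < m →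
      (ε = 1 → base (uf b) ≤ base (uf a)) ∧ (ε = -1 → base (uf a) ≤ base (uf b))) :
    (ε = 1 → (jseq ε uf base l : ℕ) < (jseq ε uf base (l+1) : ℕ)) ∧
    (ε = -1 → (jseq ε uf base (l+1) : ℕ) < (jseq ε uf base l : ℕ)) := by
  have hlm : l < m := by omega
  have hB1 : sortDesc (chv ε uf base (l+1)) (jseq ε uf base l) = base (uf l) + ε := by
    rw [chain_step hε l]
    simp only [bp, eq_self_iff_true, if_true]
    rw [chain_sorted_val hε hlm hmono]
  have hanti : Antitone (sortDesc (chv ε uf base (l+1))) := antitone_sortDesc _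
  have ht : chv ε uf base (l+1) (uf (l+1)) = base (uf (l+1)) := chv_self hε hl hmono
  have hv := hvals l (l+1) (by omega) hl
  constructor
  · rintro rfl
    have hj1 : (jseq (1:ℤ) uf base (l+1) : ℕ)
        = cntGT (chv 1 uf base (l+1)) (base (uf (l+1))) := by
      show jPos 1 (chv 1 uf base (l+1)) (uf (l+1)) = _
      rw [jPos, if_pos rfl, ht]
    rw [hj1, ← cntGT_sortDesc]
    rw [← antitone_gt_iff hanti]
    rw [hB1]
    have := hv.1 rfl
    omega
  · rintro rfl
    have hj1 : (jseq (-1:ℤ) uf base (l+1) : ℕ)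
        = cntGT (chv (-1) uf base (l+1)) (base (uf (l+1)) - 1) - 1 := by
      show jPos (-1) (chv (-1) uf base (l+1)) (uf (l+1)) = _
      rw [jPos, if_neg (by norm_num), ht]
    have hcle : cntGT (chv (-1) uf base (l+1)) (base (uf (l+1)) - 1)
        ≤ (jseq (-1:ℤ) uf base l : ℕ) := by
      rw [← cntGT_sortDesc]
      by_contra hc
      push_neg at hc
      have := (antitone_gt_iff hanti (base (uf (l+1)) - 1) (jseq (-1:ℤ) uf base l)).mpr hc
      rw [hB1] at this
      have := hv.2 rfl
      omega
    have hpos : 1 ≤ cntGT (chv (-1) uf base (l+1)) (base (uf (l+1)) - 1) := by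
      have h2 := cntGT_self_lt_pred (chv (-1) uf base (l+1)) (uf (l+1))
      rw [ht] at h2
      omega
    omega

lemma chain_mono (hε : ε = 1 ∨ ε = -1)
    (hmono : ∀ a b, a < b → b < m → (ε = 1 → uf a < uf b) ∧ (ε = -1 → uf b < uf a))
    (hvals : ∀ a b, a ≤ b → b < m →
      (ε = 1 → base (uf b) ≤ base (uf a)) ∧ (ε = -1 → base (uf a) ≤ base (uf b))) :
    ∀ a b, a < b → b < m →
      (ε = 1 → (jseq ε uf base a : ℕ) < (jseq ε uf base b : ℕ)) ∧
      (ε = -1 → (jseq ε uf base b : ℕ) < (jseq ε uf base a : ℕ)) := by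
  intro a b
  induction b with
  | zero => omega
  | succ b ih =>
    intro hab hbm
    have hadj := chain_adj (m := m) hε hbm hmono hvals
    rcases Nat.lt_or_ge a b with h | h
    · have h1 := ih h (by omega)
      exact ⟨fun he => lt_trans (h1.1 he) (hadj.1 he),
             fun he => lt_trans (hadj.2 he) (h1.2 he)⟩
    · have : a = b := by omega
      rw [this]
      exact hadj

lemma chain_form (hε : ε = 1 ∨ ε = -1) :
    ∀ q, sortDesc (chv ε uf base q)
      = fun i => sortDesc base i + ε * ∑ l ∈ Finset.range q,
          (if i = jseq ε uf base l then 1 else 0) := by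
  intro q
  induction q with
  | zero =>
    have : chv ε uf base 0 = base := by funext i; simp [chv]
    rw [this]
    funext i
    simp
  | succ q ih =>
    rw [chain_step hε q, ih]
    funext i
    simp only [bp, Finset.sum_range_succ]
    by_cases h : i = jseq ε uf base q <;> simp [h] <;> ring

lemma chain_osc (hε : ε = 1 ∨ ε = -1)
    (hmono : ∀ a b, a < b → b < m → (ε = 1 → uf a < uf b) ∧ (ε = -1 → uf b < uf a))
    (hvals : ∀ a b, a ≤ b → b < m →
      (ε = 1 → base (uf b) ≤ base (uf a)) ∧ (ε = -1 → base (uf a) ≤ base (uf b)))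
    {q : ℕ} (hq : q ≤ m) :
    oscStep (sortDesc base) (sortDesc (chv ε uf base m)) q = sortDesc (chv ε uf base q) := by
  have hform := chain_form (uf := uf) (base := base) hε
  set jf := jseq ε uf base with hjfdef
  set B0 := sortDesc base with hB0
  have hmonoJ : ∀ a b, a < b → b < m →
      (ε = 1 → (jf a : ℕ) < (jf b : ℕ)) ∧ (ε = -1 → (jf b : ℕ) < (jf a : ℕ)) :=
    chain_mono hε hmono hvals
  have hεne : ε ≠ 0 := by rcases hε with rfl | rfl <;> norm_num
  have hinj : ∀ a b, a < m → b < m → jf a = jf b → a = b := by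
    intro a b ha hb h
    have hv : (jf a : ℕ) = (jf b : ℕ) := by rw [h]
    by_contra hne
    rcases Nat.lt_or_ge a b with hh | hh
    · have := hmonoJ a b hh hb
      rcases hε with rfl | rfl
      · exact absurd hv (Nat.ne_of_lt (this.1 rfl))
      · exact absurd hv.symm (Nat.ne_of_lt (this.2 rfl))
    · have hh' : b < a := by omega
      have := hmonoJ b a hh' ha
      rcases hε with rfl | rfl
      · exact absurd hv.symm (Nat.ne_of_lt (this.1 rfl))
      · exact absurd hv (Nat.ne_of_lt (this.2 rfl))
  have hsum : ∀ q', q' ≤ m → ∀ i : Fin r,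
      (∑ l ∈ Finset.range q', if i = jf l then (1:ℤ) else 0)
        = if ∃ l, l < q' ∧ jf l = i then 1 else 0 := by
    intro q' hq' i
    by_cases hex : ∃ l, l < q' ∧ jf l = i
    · obtain ⟨l0, hl0, hl0e⟩ := hex
      rw [if_pos ⟨l0, hl0, hl0e⟩]
      rw [Finset.sum_eq_single l0]
      · rw [if_pos hl0e.symm]
      · intro l hl hne
        rw [Finset.mem_range] at hl
        rw [if_neg]
        intro h
        exact hne (hinj l l0 (by omega) (by omega) (by rw [← h, hl0e]))
      · intro h
        exact absurd (Finset.mem_range.mpr hl0) h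
    · rw [if_neg hex]
      apply Finset.sum_eq_zero
      intro l hl
      rw [Finset.mem_range] at hl
      rw [if_neg]
      intro h
      exact hex ⟨l, hl, h.symm⟩
  have hBq : ∀ q', q' ≤ m → ∀ i, sortDesc (chv ε uf base q') i
      = B0 i + ε * (if ∃ l, l < q' ∧ jf l = i then 1 else 0) := by
    intro q' hq' i
    rw [hform q']
    simp only
    rw [hsum q' hq' i]
  -- the difference set
  have hDmem : ∀ i : Fin r,
      (sortDesc (chv ε uf base m) i ≠ B0 i) ↔ ∃ l, l < m ∧ jf l = i := by
    intro i
    rw [hBq m le_rfl i]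
    by_cases hex : ∃ l, l < m ∧ jf l = i
    · rw [if_pos hex, mul_one]
      constructor
      · intro _; exact hex
      · intro _ h; omega
    · rw [if_neg hex, mul_zero, add_zero]
      simp [hex]
  set Bm := sortDesc (chv ε uf base m) with hBmdef
  set D := Finset.univ.filter (fun i' => Bm i' ≠ B0 i') with hDdef
  funext i
  have hosc : oscStep B0 Bm q i =
      (if i ∈ D ∧ (if B0 i < Bm i then (D.filter fun i' => i' ≤ i).card ≤ q
          else (D.filter fun i' => i ≤ i').card ≤ q) then Bm i else B0 i) := rfl
  rw [hosc]
  have hmemD : ∀ x : Fin r, x ∈ D ↔ ∃ l, l < m ∧ jf l = x := by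
    intro x
    rw [hDdef, Finset.mem_filter]
    constructor
    · intro h; exact (hDmem x).mp h.2
    · intro h; exact ⟨Finset.mem_univ x, (hDmem x).mpr h⟩
  by_cases hex : ∃ l, l < m ∧ jf l = i
  · obtain ⟨l0, hl0m, hl0e⟩ := hex
    have hBmi : Bm i = B0 i + ε := by
      rw [hBmdef, hBq m le_rfl i, if_pos ⟨l0, hl0m, hl0e⟩, mul_one]
    have hiD : i ∈ D := (hmemD i).mpr ⟨l0, hl0m, hl0e⟩
    have hexq : (∃ l, l < q ∧ jf l = i) ↔ l0 < q := by
      constructor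
      · rintro ⟨l, hl, hle⟩
        have : l = l0 := hinj l l0 (by omega) hl0m (by rw [hle, hl0e])
        omega
      · intro h; exact ⟨l0, h, hl0e⟩
    have hRHS : sortDesc (chv ε uf base q) i = B0 i + ε * (if l0 < q then 1 else 0) := by
      rw [hBq q hq i]
      by_cases h : l0 < q
      · rw [if_pos (hexq.mpr h), if_pos h]
      · rw [if_neg (fun hh => h (hexq.mp hh)), if_neg h]
    rw [hRHS]
    -- card computations
    have hcard : (if ε = 1 then (D.filter fun i' => i' ≤ i) else (D.filter fun i' => i ≤ i')).card
        = l0 + 1 := by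
      have himg : (if ε = 1 then (D.filter fun i' => i' ≤ i) else (D.filter fun i' => i ≤ i'))
          = (Finset.range (l0+1)).image jf := by
        ext x
        rw [Finset.mem_image]
        have hmx := hmemD x
        rcases hε with rfl | rfl
        · rw [if_pos rfl, Finset.mem_filter]
          constructor
          · rintro ⟨hxD, hxle⟩
            obtain ⟨l, hlm, hle⟩ := (hmemD x).mp hxD
            refine ⟨l, Finset.mem_range.mpr ?_, hle⟩
            by_contra hc
            have hgt : l0 < l := by omega
            have hj := (hmonoJ l0 l hgt hlm).1 rfl
            rw [← hle, ← hl0e, Fin.le_def] at hxle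
            omega
          · rintro ⟨l, hll, rfl⟩
            rw [Finset.mem_range] at hll
            refine ⟨(hmemD _).mpr ⟨l, by omega, rfl⟩, ?_⟩
            rcases Nat.lt_or_ge l l0 with h | h
            · have hj := (hmonoJ l l0 h hl0m).1 rfl
              rw [← hl0e, Fin.le_def]
              omega
            · have : l = l0 := by omega
              rw [this, hl0e]
        · rw [if_neg (by norm_num), Finset.mem_filter]
          constructor
          · rintro ⟨hxD, hxle⟩
            obtain ⟨l, hlm, hle⟩ := (hmemD x).mp hxD
            refine ⟨l, Finset.mem_range.mpr ?_, hle⟩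
            by_contra hc
            have hgt : l0 < l := by omega
            have hj := (hmonoJ l0 l hgt hlm).2 rfl
            rw [← hle, ← hl0e, Fin.le_def] at hxle
            omega
          · rintro ⟨l, hll, rfl⟩
            rw [Finset.mem_range] at hll
            refine ⟨(hmemD _).mpr ⟨l, by omega, rfl⟩, ?_⟩
            rcases Nat.lt_or_ge l l0 with h | h
            · have hj := (hmonoJ l l0 h hl0m).2 rfl
              rw [← hl0e, Fin.le_def]
              omega
            · have : l = l0 := by omega
              rw [this, hl0e]
      rw [himg, Finset.card_image_of_injOn, Finset.card_range]
      intro a ha b hb h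
      rw [Finset.coe_range, Set.mem_Iio] at ha hb
      exact hinj a b (by omega) (by omega) h
    by_cases hlq : l0 < q
    · rw [if_pos, if_pos hlq]
      · omega
      refine ⟨hiD, ?_⟩
      rcases hε with rfl | rfl
      · rw [if_pos (by omega)]
        rw [if_pos rfl] at hcard
        omega
      · rw [if_neg (by omega)]
        rw [if_neg (by norm_num)] at hcard
        omega
    · rw [if_neg, if_neg hlq]
      · ring
      rintro ⟨-, hcnd⟩
      rcases hε with rfl | rfl
      · rw [if_pos (by omega)] at hcnd
        rw [if_pos rfl] at hcard
        omega
      · rw [if_neg (by omega)] at hcnd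
        rw [if_neg (by norm_num)] at hcard
        omega
  · have hiD : i ∉ D := fun h => hex ((hmemD i).mp h)
    rw [if_neg (fun h => hiD h.1)]
    rw [hBq q hq i, if_neg, mul_zero, add_zero]
    rintro ⟨l, hl, hle⟩
    exact hex ⟨l, by omega, hle⟩

/-- interior vectors -/
def vIT (κ : GP r) (εc εd : ℤ) (P Q : Finset (Fin r)) : GP r :=
  fun i => κ i + (if i ∈ P then εc else 0) + (if i ∈ Q then εd else 0)

lemma card_filter_split (p : Fin r → Prop) [DecidablePred p] (x : Fin r) :
    (Finset.univ.filter fun i => p i).card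
      = ((Finset.univ.erase x).filter fun i => p i).card + if p x then 1 else 0 := by
  conv_lhs => rw [← Finset.insert_erase (Finset.mem_univ x)]
  rw [Finset.filter_insert]
  by_cases h : p x
  · rw [if_pos h, if_pos h, Finset.card_insert_of_notMem]
    intro hh
    exact (Finset.mem_erase.mp (Finset.mem_of_mem_filter x hh)).1 rfl
  · rw [if_neg h, if_neg h, add_zero]

lemma cntGT_bump (v : GP r) (ε : ℤ) (x : Fin r) (s : ℤ) :
    (cntGT (fun i => v i + bp ε x i) s : ℤ)
      = cntGT v s + ((if s < v x + ε then 1 else 0) - (if s < v x then 1 else 0)) := by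
  unfold cntGT
  beta_reduce
  rw [card_filter_split (fun i => s < v i + bp ε x i) x,
      card_filter_split (fun i => s < v i) x]
  have he : ((Finset.univ.erase x).filter fun i => s < v i + bp ε x i)
      = ((Finset.univ.erase x).filter fun i => s < v i) := by
    apply Finset.filter_congr
    intro i hi
    have : i ≠ x := (Finset.mem_erase.mp hi).1
    simp [bp, this]
  rw [he]
  have hbx : bp ε x x = ε := by simp [bp]
  rw [hbx]
  by_cases h1 : s < v x + ε <;> by_cases h2 : s < v x <;>
    simp [h1, h2] <;> push_cast <;> ring

lemma card_two_of_two {v : GP r} {a b : Fin r} (hab : a ≠ b) {s : ℤ}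
    (ha : v a = s) (hb : v b = s) :
    2 ≤ (Finset.univ.filter fun i => v i = s).card := by
  have hsub : ({a, b} : Finset (Fin r)) ⊆ Finset.univ.filter fun i => v i = s := by
    intro i hi
    rcases Finset.mem_insert.mp hi with rfl | hi
    · exact Finset.mem_filter.mpr ⟨Finset.mem_univ _, ha⟩
    · rcases Finset.mem_singleton.mp hi with rfl
      exact Finset.mem_filter.mpr ⟨Finset.mem_univ _, hb⟩
  have := Finset.card_le_card hsub
  rwa [Finset.card_pair hab] at this

lemma card_zero_of_none {v : GP r} {s : ℤ} (h : ∀ i, v i ≠ s) :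
    (Finset.univ.filter fun i => v i = s).card = 0 :=
  Finset.card_eq_zero.mpr (Finset.filter_eq_empty_iff.mpr fun {i} _ => h i)

/-- THE window lemma: the bump position for `w = v + bp εc x` lands inside the
block of value `v u` of `v`. -/
lemma window {εc εd : ℤ} (hc : εc = 1 ∨ εc = -1) (hd : εd = 1 ∨ εd = -1)
    (κ : GP r) (S U P Q : Finset (Fin r)) (x u : Fin r) (hxS : x ∈ S) (huU : u ∈ U)
    (hκ : Antitone κ)
    (hν : Antitone (fun i => κ i + (if i ∈ S then εc else 0) + (if i ∈ U then εd else 0)))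
    (hP : ∀ i, i ∈ P ↔ i ∈ S ∧ (if εc = 1 then i < x else x < i))
    (hQ : ∀ i, i ∈ Q ↔ i ∈ U ∧ (if εd = 1 then i < u else u < i)) :
    cntGT (vIT κ εc εd P Q) (vIT κ εc εd P Q u)
        ≤ jPos εd (fun i => vIT κ εc εd P Q i + bp εc x i) u ∧
      jPos εd (fun i => vIT κ εc εd P Q i + bp εc x i) u
        < cntGT (vIT κ εc εd P Q) (vIT κ εc εd P Q u - 1) := by
  set v := vIT κ εc εd P Q with hvdef
  set w := fun i => v i + bp εc x i with hwdef
  have hxP : x ∉ P := by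
    intro hh
    rcases (hP x).mp hh with ⟨-, h⟩
    rcases hc with rfl | rfl
    · rw [if_pos rfl] at h; exact lt_irrefl _ h
    · rw [if_neg (by norm_num)] at h; exact lt_irrefl _ h
  have huQ : u ∉ Q := by
    intro hh
    rcases (hQ u).mp hh with ⟨-, h⟩
    rcases hd with rfl | rfl
    · rw [if_pos rfl] at h; exact lt_irrefl _ h
    · rw [if_neg (by norm_num)] at h; exact lt_irrefl _ h
  have hcw : ∀ s : ℤ, (cntGT w s : ℤ)
      = cntGT v s + ((if s < v x + εc then 1 else 0) - (if s < v x then 1 else 0)) :=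
    fun s => cntGT_bump v εc x s
  have hpred : ∀ s : ℤ, cntGT v (s - 1)
      = cntGT v s + (Finset.univ.filter fun i => v i = s).card := fun s => cntGT_pred v s
  have hself := cntGT_self_lt_pred v u
  have hvu : v u = κ u + (if u ∈ P then εc else 0) := by
    show κ u + (if u ∈ P then εc else 0) + (if u ∈ Q then εd else 0) = _
    rw [if_neg huQ]; ring
  rcases hd with rfl | rfl
  · -- εd = 1
    have hjw : jPos 1 w u = cntGT w (w u) := by unfold jPos; rw [if_pos rfl]
    by_cases hux : u = x
    · subst hux
      -- x is replaced by u
      have hvuu : v u = κ u := by rw [hvu, if_neg hxP, add_zero]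
      have hwu : w u = v u + εc := by
        show v u + bp εc u u = v u + εc
        simp [bp]
      rcases hc with rfl | rfl
      · -- εd = 1, εc = 1, u = x : structural case (3)
        have hstruct : ∀ i, v i ≠ v u + 1 := by
          intro i hcon
          by_cases hiu : i < u
          · have hiP : i ∈ P ↔ i ∈ S := by rw [hP i, if_pos rfl]; exact and_iff_left hiu
            have hiQ : i ∈ Q ↔ i ∈ U := by rw [hQ i, if_pos rfl]; exact and_iff_left hiu
            have hh := hν (le_of_lt hiu)
            simp only at hh
            rw [if_pos hxS, if_pos huU] at hh
            have hvi : v i = κ i + (if i ∈ S then (1:ℤ) else 0) + (if i ∈ U then 1 else 0) := by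
              show κ i + (if i ∈ P then (1:ℤ) else 0) + (if i ∈ Q then 1 else 0) = _
              rw [if_congr hiP rfl rfl, if_congr hiQ rfl rfl]
            split_ifs at hh hvi <;> omega
          · have hiP : i ∉ P := by
              intro hh; have := ((hP i).mp hh).2; rw [if_pos rfl] at this; exact hiu this
            have hiQ : i ∉ Q := by
              intro hh; have := ((hQ i).mp hh).2; rw [if_pos rfl] at this; exact hiu this
            have hvi : v i = κ i := by
              show κ i + _ + _ = κ i; rw [if_neg hiP, if_neg hiQ]; ring
            have hki : κ i ≤ κ u := hκ (not_lt.mp hiu)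
            omega
        have hcard0 := card_zero_of_none hstruct
        have hp1 : cntGT v (v u) = cntGT v (v u + 1)
            + (Finset.univ.filter fun i => v i = v u + 1).card := by
          have := hpred (v u + 1)
          rwa [show v u + 1 - 1 = v u from by ring] at this
        have hjw2 : jPos 1 w u = cntGT w (v u + 1) := by rw [hjw, hwu]
        have hcw2 := hcw (v u + 1)
        rw [if_neg (by omega), if_neg (by omega)] at hcw2
        constructor
        · rw [hjw2]; omega
        · rw [hjw2]; omega
      · -- εd = 1, εc = -1, u = x : no structural case needed
        have hjw2 : jPos 1 w u = cntGT w (v u - 1) := by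
          rw [hjw, hwu, show v u + (-1:ℤ) = v u - 1 from by ring]
        have hcw2 := hcw (v u - 1)
        rw [if_neg (by omega), if_pos (by omega)] at hcw2
        constructor
        · rw [hjw2]; omega
        · rw [hjw2]; omega
    · -- u ≠ x
      have hwu : w u = v u := by
        show v u + bp εc x u = v u
        simp [bp, hux]
      have hjw2 : jPos 1 w u = cntGT w (v u) := by rw [hjw, hwu]
      have hxu : x ≠ u := fun h => hux h.symm
      rcases hc with rfl | rfl
      · -- εd = 1, εc = 1, u ≠ x : good case
        have hcw2 := hcw (v u)
        by_cases h2 : v u < v x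
        · rw [if_pos (by omega), if_pos h2] at hcw2
          exact ⟨by rw [hjw2]; omega, by rw [hjw2]; omega⟩
        · by_cases h1 : v u < v x + 1
          · rw [if_pos h1, if_neg h2] at hcw2
            have hvxu : v x = v u := by omega
            have hc2 := card_two_of_two hxu hvxu rfl
            have hp1 := hpred (v u)
            exact ⟨by rw [hjw2]; omega, by rw [hjw2]; omega⟩
          · rw [if_neg h1, if_neg h2] at hcw2
            exact ⟨by rw [hjw2]; omega, by rw [hjw2]; omega⟩
      · -- εd = 1, εc = -1, u ≠ x : structural case (2): v x ≠ v u + 1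
        have hstruct : v x ≠ v u + 1 := by
          intro hcon
          rcases lt_or_gt_of_ne hxu with hxlt | hxgt
          · -- x < u
            have hxQ : x ∈ Q ↔ x ∈ U := by rw [hQ x, if_pos rfl]; exact and_iff_left hxlt
            have huP : u ∈ P ↔ u ∈ S := by
              rw [hP u, if_neg (by norm_num)]; exact and_iff_left hxlt
            have hh := hν (le_of_lt hxlt)
            simp only at hh
            rw [if_pos hxS, if_pos huU] at hh
            have hvx : v x = κ x + (if x ∈ U then (1:ℤ) else 0) := by
              show κ x + (if x ∈ P then (-1:ℤ) else 0) + (if x ∈ Q then 1 else 0) = _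
              rw [if_neg hxP, if_congr hxQ rfl rfl]; ring
            have hvu2 : v u = κ u + (if u ∈ S then (-1:ℤ) else 0) := by
              rw [hvu, if_congr huP rfl rfl]
            split_ifs at hh hvx hvu2 <;> omega
          · -- u < x
            have hxQ : x ∉ Q := by
              intro hh; have := ((hQ x).mp hh).2; rw [if_pos rfl] at this
              exact absurd this (not_lt.mpr (le_of_lt hxgt))
            have huP : u ∉ P := by
              intro hh; have := ((hP u).mp hh).2; rw [if_neg (by norm_num)] at this
              exact absurd this (not_lt.mpr (le_of_lt hxgt))
            have hvx : v x = κ x := by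
              show κ x + _ + _ = κ x; rw [if_neg hxP, if_neg hxQ]; ring
            have hvu2 : v u = κ u := by rw [hvu, if_neg huP, add_zero]
            have := hκ (le_of_lt hxgt)
            omega
        have hcw2 := hcw (v u)
        by_cases h2 : v u < v x
        · rw [if_pos (by omega), if_pos h2] at hcw2
          constructor
          · rw [hjw2]; omega
          · rw [hjw2]; omega
        · rw [if_neg (by omega), if_neg h2] at hcw2
          constructor
          · rw [hjw2]; omega
          · rw [hjw2]; omega
  · -- εd = -1
    have hjw : jPos (-1) w u = cntGT w (w u - 1) - 1 := by
      unfold jPos; rw [if_neg (by norm_num)]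
    by_cases hux : u = x
    · subst hux
      have hvuu : v u = κ u := by rw [hvu, if_neg hxP, add_zero]
      have hwu : w u = v u + εc := by
        show v u + bp εc u u = v u + εc
        simp [bp]
      rcases hc with rfl | rfl
      · -- εd = -1, εc = 1, u = x : good case
        have hjw2 : jPos (-1) w u = cntGT w (v u) - 1 := by
          rw [hjw, hwu]
          norm_num
        have hcw2 := hcw (v u)
        rw [if_pos (by omega), if_neg (by omega)] at hcw2
        constructor
        · rw [hjw2]; omega
        · rw [hjw2]; omega
      · -- εd = -1, εc = -1, u = x : structural case (8)
        have hstruct : ∀ i, v i ≠ v u - 1 := by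
          intro i hcon
          by_cases hiu : u < i
          · have hiP : i ∈ P ↔ i ∈ S := by
              rw [hP i, if_neg (by norm_num)]; exact and_iff_left hiu
            have hiQ : i ∈ Q ↔ i ∈ U := by
              rw [hQ i, if_neg (by norm_num)]; exact and_iff_left hiu
            have hh := hν (le_of_lt hiu)
            simp only at hh
            rw [if_pos hxS, if_pos huU] at hh
            have hvi : v i = κ i + (if i ∈ S then (-1:ℤ) else 0)
                + (if i ∈ U then (-1:ℤ) else 0) := by
              show κ i + (if i ∈ P then (-1:ℤ) else 0) + (if i ∈ Q then (-1:ℤ) else 0) = _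
              rw [if_congr hiP rfl rfl, if_congr hiQ rfl rfl]
            split_ifs at hh hvi <;> omega
          · have hiP : i ∉ P := by
              intro hh; have := ((hP i).mp hh).2; rw [if_neg (by norm_num)] at this
              exact hiu this
            have hiQ : i ∉ Q := by
              intro hh; have := ((hQ i).mp hh).2; rw [if_neg (by norm_num)] at this
              exact hiu this
            have hvi : v i = κ i := by
              show κ i + _ + _ = κ i; rw [if_neg hiP, if_neg hiQ]; ring
            have hki : κ u ≤ κ i := hκ (not_lt.mp hiu)
            omega
        have hcard0 := card_zero_of_none hstruct
        have hp1 : cntGT v (v u - 2) = cntGT v (v u - 1)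
            + (Finset.univ.filter fun i => v i = v u - 1).card := by
          have := hpred (v u - 1)
          rwa [show v u - 1 - 1 = v u - 2 from by ring] at this
        have hjw2 : jPos (-1) w u = cntGT w (v u - 2) - 1 := by
          rw [hjw, hwu]
          norm_num
          rw [show v u + -1 - 1 = v u - 2 from by ring]
        have hcw2 := hcw (v u - 2)
        rw [if_pos (by omega), if_pos (by omega)] at hcw2
        constructor
        · rw [hjw2]; omega
        · rw [hjw2]; omega
    · -- u ≠ x
      have hwu : w u = v u := by
        show v u + bp εc x u = v u
        simp [bp, hux]
      have hjw2 : jPos (-1) w u = cntGT w (v u - 1) - 1 := by rw [hjw, hwu]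
      have hxu : x ≠ u := fun h => hux h.symm
      rcases hc with rfl | rfl
      · -- εd = -1, εc = 1, u ≠ x : structural case (5): v x ≠ v u - 1
        have hstruct : v x ≠ v u - 1 := by
          intro hcon
          rcases lt_or_gt_of_ne hxu with hxlt | hxgt
          · -- x < u
            have hxQ : x ∉ Q := by
              intro hh; have := ((hQ x).mp hh).2; rw [if_neg (by norm_num)] at this
              exact absurd this (not_lt.mpr (le_of_lt hxlt))
            have huP : u ∉ P := by
              intro hh; have := ((hP u).mp hh).2; rw [if_pos rfl] at this
              exact absurd this (not_lt.mpr (le_of_lt hxlt))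
            have hvx : v x = κ x := by
              show κ x + _ + _ = κ x; rw [if_neg hxP, if_neg hxQ]; ring
            have hvu2 : v u = κ u := by rw [hvu, if_neg huP, add_zero]
            have := hκ (le_of_lt hxlt)
            omega
          · -- u < x
            have hxQ : x ∈ Q ↔ x ∈ U := by
              rw [hQ x, if_neg (by norm_num)]; exact and_iff_left hxgt
            have huP : u ∈ P ↔ u ∈ S := by
              rw [hP u, if_pos rfl]; exact and_iff_left hxgt
            have hh := hν (le_of_lt hxgt)
            simp only at hh
            rw [if_pos hxS, if_pos huU] at hh
            have hvx : v x = κ x + (if x ∈ U then (-1:ℤ) else 0) := by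
              show κ x + (if x ∈ P then (1:ℤ) else 0) + (if x ∈ Q then (-1:ℤ) else 0) = _
              rw [if_neg hxP, if_congr hxQ rfl rfl]; ring
            have hvu2 : v u = κ u + (if u ∈ S then (1:ℤ) else 0) := by
              rw [hvu, if_congr huP rfl rfl]
            split_ifs at hh hvx hvu2 <;> omega
        have hcw2 := hcw (v u - 1)
        by_cases h2 : v u - 1 < v x
        · rw [if_pos (by omega), if_pos h2] at hcw2
          constructor
          · rw [hjw2]; omega
          · rw [hjw2]; omega
        · rw [if_neg (by omega), if_neg h2] at hcw2
          constructor
          · rw [hjw2]; omega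
          · rw [hjw2]; omega
      · -- εd = -1, εc = -1, u ≠ x : good case
        have hcw2 := hcw (v u - 1)
        by_cases h1 : v u - 1 < v x + -1
        · rw [if_pos h1, if_pos (by omega)] at hcw2
          exact ⟨by rw [hjw2]; omega, by rw [hjw2]; omega⟩
        · by_cases h2 : v u - 1 < v x
          · -- v x = v u
            rw [if_neg h1, if_pos h2] at hcw2
            have hvxu : v x = v u := by omega
            have hc2 := card_two_of_two hxu hvxu rfl
            have hp1 := hpred (v u)
            exact ⟨by rw [hjw2]; omega, by rw [hjw2]; omega⟩
          · rw [if_neg h1, if_neg h2] at hcw2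
            exact ⟨by rw [hjw2]; omega, by rw [hjw2]; omega⟩

lemma interior {εc εd : ℤ} (hc : εc = 1 ∨ εc = -1) (hd : εd = 1 ∨ εd = -1)
    (κ : GP r) (S U P Q : Finset (Fin r)) (x u : Fin r) (hxS : x ∈ S) (huU : u ∈ U)
    (hκ : Antitone κ)
    (hν : Antitone (fun i => κ i + (if i ∈ S then εc else 0) + (if i ∈ U then εd else 0)))
    (hP : ∀ i, i ∈ P ↔ i ∈ S ∧ (if εc = 1 then i < x else x < i))
    (hQ : ∀ i, i ∈ Q ↔ i ∈ U ∧ (if εd = 1 then i < u else u < i)) :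
    sortDesc (fun i =>
        sortDesc (fun i' => (fun j => vIT κ εc εd P Q j + bp εc x j) i' + bp εd u i') i
        + sortDesc (vIT κ εc εd P Q) i
        - sortDesc (fun j => vIT κ εc εd P Q j + bp εc x j) i)
      = sortDesc (fun i' => vIT κ εc εd P Q i' + bp εd u i') := by
  set v := vIT κ εc εd P Q with hv
  set w := fun j => v j + bp εc x j with hw
  have hA := sortStep hd w u
  have hD := sortStep hd v u
  set jw : Fin r := ⟨jPos εd w u, jPos_lt w u⟩ with hjw
  set jv : Fin r := ⟨jPos εd v u, jPos_lt v u⟩ with hjv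
  have hred : (fun i => sortDesc (fun i' => w i' + bp εd u i') i + sortDesc v i - sortDesc w i)
      = fun i => sortDesc v i + bp εd jw i := by
    funext i
    rw [hA]
    ring
  rw [hred]
  have hwindow := window hc hd κ S U P Q x u hxS huU hκ hν hP hQ
  have hBjw : sortDesc v jw = v u :=
    sortDesc_val v (v u) jw hwindow.1 (by exact hwindow.2)
  have hBjv : sortDesc v jv = v u := by
    have hwin := jPos_window (ε := εd) v u
    exact sortDesc_val v (v u) jv hwin.1 hwin.2
  have hswap := swap_bp (ε := εd) (w := sortDesc v) (u := jw) (y := jv)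
    (by rw [hBjw, hBjv])
  calc sortDesc (fun i => sortDesc v i + bp εd jw i)
      = sortDesc ((fun i => sortDesc v i + bp εd jv i) ∘ (Equiv.swap jw jv)) := by rw [hswap]
    _ = sortDesc (fun i => sortDesc v i + bp εd jv i) := sortDesc_perm _ _
    _ = sortDesc (sortDesc (fun i' => v i' + bp εd u i')) := by rw [hD]
    _ = sortDesc (fun i' => v i' + bp εd u i') := sortDesc_eq_self (antitone_sortDesc _)

/-- indicator sums vs membership -/
lemma sum_indicator (f : ℕ → Fin r) (p : ℕ)
    (hinj : ∀ a b, a < p → b < p → f a = f b → a = b) (i : Fin r) :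
    (∑ l ∈ Finset.range p, if i = f l then (1:ℤ) else 0)
      = if i ∈ (Finset.range p).image f then 1 else 0 := by
  by_cases hex : i ∈ (Finset.range p).image f
  · rw [if_pos hex]
    obtain ⟨l0, hl0, hl0e⟩ := Finset.mem_image.mp hex
    rw [Finset.mem_range] at hl0
    rw [Finset.sum_eq_single l0]
    · rw [if_pos hl0e.symm]
    · intro l hl hne
      rw [Finset.mem_range] at hl
      rw [if_neg]
      intro h
      exact hne (hinj l l0 hl hl0 (by rw [← h, hl0e]))
    · intro h
      exact absurd (Finset.mem_range.mpr hl0) h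
  · rw [if_neg hex]
    apply Finset.sum_eq_zero
    intro l hl
    rw [Finset.mem_range] at hl
    rw [if_neg]
    intro h
    exact hex (Finset.mem_image.mpr ⟨l, Finset.mem_range.mpr hl, h.symm⟩)

/-- ε-ordered enumeration of a set of rows: increasing for ε = 1, decreasing else. -/
def enum (ε : ℤ) (S : Finset (Fin r)) (hr : 0 < r) : ℕ → Fin r :=
  fun l =>
    if h : l < S.card then
      (if ε = 1 then ((S.orderIsoOfFin rfl) ⟨l, h⟩ : Fin r)
       else ((S.orderIsoOfFin rfl) ⟨S.card - 1 - l, by omega⟩ : Fin r))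
    else ⟨0, hr⟩

lemma enum_mem (ε : ℤ) (S : Finset (Fin r)) (hr : 0 < r) {l : ℕ} (hl : l < S.card) :
    enum ε S hr l ∈ S := by
  unfold enum
  rw [dif_pos hl]
  split <;> exact Finset.coe_mem _

lemma enum_mono (ε : ℤ) (S : Finset (Fin r)) (hr : 0 < r) {a b : ℕ}
    (hab : a < b) (hb : b < S.card) :
    (ε = 1 → enum ε S hr a < enum ε S hr b) ∧ (ε = -1 → enum ε S hr b < enum ε S hr a) := by
  have ha : a < S.card := lt_trans hab hb
  constructor
  · rintro rfl
    unfold enum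
    rw [dif_pos ha, dif_pos hb, if_pos rfl, if_pos rfl]
    exact Subtype.coe_lt_coe.mpr ((OrderIso.lt_iff_lt _).mpr (by exact hab))
  · rintro rfl
    unfold enum
    rw [dif_pos ha, dif_pos hb, if_neg (by norm_num), if_neg (by norm_num)]
    refine Subtype.coe_lt_coe.mpr ((OrderIso.lt_iff_lt _).mpr ?_)
    show S.card - 1 - b < S.card - 1 - a
    omega

lemma enum_image (ε : ℤ) (S : Finset (Fin r)) (hr : 0 < r) (hε : ε = 1 ∨ ε = -1) :
    (Finset.range S.card).image (enum ε S hr) = S := by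
  ext i
  simp only [Finset.mem_image, Finset.mem_range]
  constructor
  · rintro ⟨l, hl, rfl⟩
    exact enum_mem ε S hr hl
  · intro hi
    set m : Fin S.card := (S.orderIsoOfFin rfl).symm ⟨i, hi⟩ with hm
    have him : ((S.orderIsoOfFin rfl) m : Fin r) = i := by
      rw [hm, OrderIso.apply_symm_apply]
    rcases hε with rfl | rfl
    · refine ⟨(m : ℕ), m.isLt, ?_⟩
      unfold enum
      rw [dif_pos m.isLt, if_pos rfl]
      exact him
    · refine ⟨S.card - 1 - (m : ℕ), by omega, ?_⟩
      unfold enum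
      rw [dif_pos (by omega : S.card - 1 - (m : ℕ) < S.card), if_neg (by norm_num)]
      have hidx : (⟨S.card - 1 - (S.card - 1 - (m : ℕ)), by omega⟩ : Fin S.card) = m :=
        Fin.ext (by show S.card - 1 - (S.card - 1 - (m:ℕ)) = (m:ℕ); have := m.isLt; omega)
      rw [hidx]
      exact him

lemma enum_char (ε : ℤ) (S : Finset (Fin r)) (hr : 0 < r) (hε : ε = 1 ∨ ε = -1)
    {p : ℕ} (hp : p < S.card) (i : Fin r) :
    i ∈ (Finset.range p).image (enum ε S hr)
      ↔ (i ∈ S ∧ (if ε = 1 then i < enum ε S hr p else enum ε S hr p < i)) := by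
  constructor
  · intro hmem
    obtain ⟨l, hl, rfl⟩ := Finset.mem_image.mp hmem
    rw [Finset.mem_range] at hl
    refine ⟨enum_mem ε S hr (by omega), ?_⟩
    have := enum_mono ε S hr hl hp
    rcases hε with rfl | rfl
    · rw [if_pos rfl]; exact this.1 rfl
    · rw [if_neg (by norm_num)]; exact this.2 rfl
  · rintro ⟨hiS, hord⟩
    obtain ⟨m, him⟩ : ∃ m : Fin S.card, ((S.orderIsoOfFin rfl) m : Fin r) = i :=
      ⟨(S.orderIsoOfFin rfl).symm ⟨i, hiS⟩, by rw [OrderIso.apply_symm_apply]⟩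
    rcases hε with rfl | rfl
    · rw [if_pos rfl] at hord
      have hplide : enum 1 S hr p = ((S.orderIsoOfFin rfl) ⟨p, hp⟩ : Fin r) := by
        unfold enum; rw [dif_pos hp, if_pos rfl]
      rw [hplide, ← him] at hord
      have hmp : (m : ℕ) < p :=
        Fin.lt_def.mp ((OrderIso.lt_iff_lt _).mp (Subtype.coe_lt_coe.mp hord))
      refine Finset.mem_image.mpr ⟨(m : ℕ), Finset.mem_range.mpr hmp, ?_⟩
      unfold enum
      rw [dif_pos m.isLt, if_pos rfl]
      exact him
    · rw [if_neg (by norm_num)] at hord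
      have hplide : enum (-1) S hr p
          = ((S.orderIsoOfFin rfl) ⟨S.card - 1 - p, by omega⟩ : Fin r) := by
        unfold enum; rw [dif_pos hp, if_neg (by norm_num)]
      rw [hplide, ← him] at hord
      have hmp : S.card - 1 - p < (m : ℕ) :=
        Fin.lt_def.mp ((OrderIso.lt_iff_lt _).mp (Subtype.coe_lt_coe.mp hord))
      have hllt : S.card - 1 - (m : ℕ) < p := by have := m.isLt; omega
      refine Finset.mem_image.mpr ⟨S.card - 1 - (m : ℕ), Finset.mem_range.mpr hllt, ?_⟩
      unfold enum
      rw [dif_pos (by omega : S.card - 1 - (m : ℕ) < S.card), if_neg (by norm_num)]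
      have hidx : (⟨S.card - 1 - (S.card - 1 - (m : ℕ)), by omega⟩ : Fin S.card) = m :=
        Fin.ext (by show S.card - 1 - (S.card - 1 - (m:ℕ)) = (m:ℕ); have := m.isLt; omega)
      rw [hidx]
      exact him

lemma enum_inj (ε : ℤ) (S : Finset (Fin r)) (hr : 0 < r) (hε : ε = 1 ∨ ε = -1)
    {a b : ℕ} (ha : a < S.card) (hb : b < S.card) (h : enum ε S hr a = enum ε S hr b) :
    a = b := by
  by_contra hne
  rcases Nat.lt_or_ge a b with hh | hh
  · have := enum_mono ε S hr hh hb
    rcases hε with rfl | rfl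
    · exact absurd h (ne_of_lt (this.1 rfl))
    · exact absurd h.symm (ne_of_lt (this.2 rfl))
  · have hh' : b < a := by omega
    have := enum_mono ε S hr hh' ha
    rcases hε with rfl | rfl
    · exact absurd h.symm (ne_of_lt (this.1 rfl))
    · exact absurd h (ne_of_lt (this.2 rfl))

end Chain






lemma vals_of_antitone {ε : ℤ} {uf : ℕ → Fin r} {m : ℕ} {g : GP r} (hg : Antitone g)
    (hmono : ∀ a b, a < b → b < m → (ε = 1 → uf a < uf b) ∧ (ε = -1 → uf b < uf a)) :
    ∀ a b, a ≤ b → b < m → (ε = 1 → g (uf b) ≤ g (uf a)) ∧ (ε = -1 → g (uf a) ≤ g (uf b)) := by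
  intro a b hab hb
  rcases eq_or_lt_of_le hab with rfl | hlt
  · exact ⟨fun _ => le_refl _, fun _ => le_refl _⟩
  · exact ⟨fun h => hg (le_of_lt ((hmono a b hlt hb).1 h)),
           fun h => hg (le_of_lt ((hmono a b hlt hb).2 h))⟩

lemma vIT_insertP (κ : GP r) (εc εd : ℤ) (P Q : Finset (Fin r)) {x : Fin r} (hx : x ∉ P) :
    ∀ j, vIT κ εc εd (insert x P) Q j = vIT κ εc εd P Q j + bp εc x j := by
  intro j
  unfold vIT bp
  by_cases hjx : j = x
  · subst hjx
    rw [if_pos (Finset.mem_insert_self _ _), if_neg hx, if_pos rfl]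
    ring
  · rw [if_congr (show j ∈ insert x P ↔ j ∈ P by
        rw [Finset.mem_insert]; exact or_iff_right hjx) rfl rfl, if_neg hjx]
    ring

lemma vIT_insertQ (κ : GP r) (εc εd : ℤ) (P Q : Finset (Fin r)) {u : Fin r} (hu : u ∉ Q) :
    ∀ j, vIT κ εc εd P (insert u Q) j = vIT κ εc εd P Q j + bp εd u j := by
  intro j
  unfold vIT bp
  by_cases hju : j = u
  · subst hju
    rw [if_pos (Finset.mem_insert_self _ _), if_neg hu, if_pos rfl]
    ring
  · rw [if_congr (show j ∈ insert u Q ↔ j ∈ Q by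
        rw [Finset.mem_insert]; exact or_iff_right hju) rfl rfl, if_neg hju]
    ring


end AuxOsc

/-- **Lemma (oscillization of a local rule diagram is well defined).** Fill the
`|c| × |d|` grid whose left column is `std(κ → λ)` and whose top row is `std(λ → ν)`
by local rules (from the upper left).  Then the bottom row equals `std(κ → μ)` and the
right column equals `std(μ → ν)`, where `μ = sort(ν + κ - λ)`; in particular the
bottom-right corner is `μ`. -/
theorem oscillization_of_local_rule
    (r : ℕ) (κ lam ν μ : GP r) (c d : ℤ)
    (hκ : Antitone κ) (hlam : Antitone lam) (hν : Antitone ν)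
    (h1 : colStep r c κ lam) (h2 : colStep r d lam ν)
    (hμ : μ = sortDesc (ν + κ - lam)) :
    (∀ q ≤ d.natAbs, grid c.natAbs κ lam ν c.natAbs q = oscStep κ μ q) ∧
    (∀ k ≤ c.natAbs, grid c.natAbs κ lam ν k d.natAbs = oscStep μ ν (c.natAbs - k)) ∧
    grid c.natAbs κ lam ν c.natAbs d.natAbs = μ := by
  rcases Nat.eq_zero_or_pos r with rfl | hr
  · have hall : ∀ f g : GP 0, f = g := fun f g => funext (fun i => i.elim0)
    exact ⟨fun _ _ => hall _ _, fun _ _ => hall _ _, hall _ _⟩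
  obtain ⟨S, hScard, hSeq⟩ := h1
  obtain ⟨U, hUcard, hUeq⟩ := h2
  set εc : ℤ := if 0 ≤ c then 1 else -1 with hεcdef
  set εd : ℤ := if 0 ≤ d then 1 else -1 with hεddef
  have hc : εc = 1 ∨ εc = -1 := by rw [hεcdef]; split <;> simp
  have hd : εd = 1 ∨ εd = -1 := by rw [hεddef]; split <;> simp
  have hlameq : ∀ i, lam i = κ i + (if i ∈ S then εc else 0) := by
    intro i
    rw [hεcdef]
    by_cases h0 : 0 ≤ c
    · rw [if_pos h0] at hSeq
      rw [if_pos h0, hSeq]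
      show κ i + indV S i = _
      unfold indV
      split <;> ring
    · rw [if_neg h0] at hSeq
      rw [if_neg h0, hSeq]
      show κ i - indV S i = _
      unfold indV
      split <;> ring
  have hνlameq : ∀ i, ν i = lam i + (if i ∈ U then εd else 0) := by
    intro i
    rw [hεddef]
    by_cases h0 : 0 ≤ d
    · rw [if_pos h0] at hUeq
      rw [if_pos h0, hUeq]
      show lam i + indV U i = _
      unfold indV
      split <;> ring
    · rw [if_neg h0] at hUeq
      rw [if_neg h0, hUeq]
      show lam i - indV U i = _
      unfold indV
      split <;> ring
  have hνeq : ∀ i, ν i = κ i + (if i ∈ S then εc else 0) + (if i ∈ U then εd else 0) := by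
    intro i; rw [hνlameq i, hlameq i]
  have hcA : c.natAbs = S.card := hScard.symm
  have hdA : d.natAbs = U.card := hUcard.symm
  rw [hcA, hdA]
  set cA := S.card with hcAdef
  set dA := U.card with hdAdef
  set eS := enum εc S hr with heSdef
  set eU := enum εd U hr with heUdef
  have hmonoS : ∀ a b, a < b → b < cA → (εc = 1 → eS a < eS b) ∧ (εc = -1 → eS b < eS a) :=
    fun a b hab hb => enum_mono εc S hr hab hb
  have hmonoU : ∀ a b, a < b → b < dA → (εd = 1 → eU a < eU b) ∧ (εd = -1 → eU b < eU a) :=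
    fun a b hab hb => enum_mono εd U hr hab hb
  have hinjS : ∀ a b, a < cA → b < cA → eS a = eS b → a = b :=
    fun a b ha hb h => enum_inj εc S hr hc ha hb h
  have hinjU : ∀ a b, a < dA → b < dA → eU a = eU b → a = b :=
    fun a b ha hb h => enum_inj εd U hr hd ha hb h
  have hsumS : ∀ p, p ≤ cA → ∀ i : Fin r,
      (∑ l ∈ Finset.range p, if i = eS l then (1:ℤ) else 0)
        = if i ∈ (Finset.range p).image eS then 1 else 0 :=
    fun p hp i => sum_indicator eS p
      (fun a b ha hb h => hinjS a b (by omega) (by omega) h) i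
  have hsumU : ∀ q, q ≤ dA → ∀ i : Fin r,
      (∑ l ∈ Finset.range q, if i = eU l then (1:ℤ) else 0)
        = if i ∈ (Finset.range q).image eU then 1 else 0 :=
    fun q hq i => sum_indicator eU q
      (fun a b ha hb h => hinjU a b (by omega) (by omega) h) i
  have himS : (Finset.range cA).image eS = S := enum_image εc S hr hc
  have himU : (Finset.range dA).image eU = U := enum_image εd U hr hd
  -- the closed form function
  set F : ℕ → ℕ → GP r := fun p q =>
    sortDesc (vIT κ εc εd ((Finset.range p).image eS) ((Finset.range q).image eU)) with hFdef
  -- κ with the U-column added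
  set κU : GP r := fun i => κ i + (if i ∈ U then εd else 0) with hκUdef
  have hμU : μ = sortDesc κU := by
    rw [hμ]
    have harg : (ν + κ - lam) = κU := by
      funext i
      show ν i + κ i - lam i = κ i + (if i ∈ U then εd else 0)
      have := hνlameq i
      omega
    rw [harg]
  -- chain conversions
  have hchv_left : ∀ p, p ≤ cA →
      chv εc eS κ p = vIT κ εc εd ((Finset.range p).image eS) ((Finset.range 0).image eU) := by
    intro p hp
    funext i
    unfold chv vIT
    rw [hsumS p hp i]
    simp only [Finset.range_zero, Finset.image_empty, Finset.notMem_empty, if_false]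
    split <;> ring
  have hchv_top : ∀ q, q ≤ dA →
      chv εd eU lam q = vIT κ εc εd ((Finset.range cA).image eS) ((Finset.range q).image eU) := by
    intro q hq
    funext i
    unfold chv vIT
    rw [hsumU q hq i, himS, hlameq i]
    split <;> split <;> ring
  have hchv_bot : ∀ q, q ≤ dA →
      chv εd eU κ q = vIT κ εc εd ((Finset.range 0).image eS) ((Finset.range q).image eU) := by
    intro q hq
    funext i
    unfold chv vIT
    rw [hsumU q hq i]
    simp only [Finset.range_zero, Finset.image_empty, Finset.notMem_empty, if_false]
    split <;> ring
  have hchv_right : ∀ p, p ≤ cA →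
      chv εc eS κU p = vIT κ εc εd ((Finset.range p).image eS) ((Finset.range dA).image eU) := by
    intro p hp
    funext i
    unfold chv vIT
    rw [hsumS p hp i, himU, hκUdef]
    show κ i + (if i ∈ U then εd else 0) + _ = _
    split <;> split <;> ring
  -- endpoints
  have hend_left : chv εc eS κ cA = lam := by
    funext i
    unfold chv
    rw [hsumS cA le_rfl i, himS, hlameq i]
    split <;> ring
  have hend_top : chv εd eU lam dA = ν := by
    funext i
    unfold chv
    rw [hsumU dA le_rfl i, himU, hνlameq i]
    split <;> ring
  have hend_bot : chv εd eU κ dA = κU := by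
    funext i
    show κ i + εd * (∑ l ∈ Finset.range dA, if i = eU l then (1:ℤ) else 0)
        = κ i + (if i ∈ U then εd else 0)
    rw [hsumU dA le_rfl i]
    rw [himU]
    by_cases h : i ∈ U <;> simp [h]
  have hend_right : chv εc eS κU cA = ν := by
    funext i
    unfold chv
    rw [hsumS cA le_rfl i, himS, hκUdef, hνeq i]
    show κ i + (if i ∈ U then εd else 0) + _ = _
    split <;> split <;> ring
  -- the four chains
  have leftChain : ∀ p, p ≤ cA → oscStep κ lam p = F p 0 := by
    intro p hp
    have h := chain_osc (ε := εc) (m := cA) (uf := eS) (base := κ) hc hmonoS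
      (vals_of_antitone hκ hmonoS) hp
    rw [sortDesc_eq_self hκ, hend_left, sortDesc_eq_self hlam, hchv_left p hp] at h
    exact h
  have topChain : ∀ q, q ≤ dA → oscStep lam ν q = F cA q := by
    intro q hq
    have h := chain_osc (ε := εd) (m := dA) (uf := eU) (base := lam) hd hmonoU
      (vals_of_antitone hlam hmonoU) hq
    rw [sortDesc_eq_self hlam, hend_top, sortDesc_eq_self hν, hchv_top q hq] at h
    exact h
  have botChain : ∀ q, q ≤ dA → oscStep κ μ q = F 0 q := by
    intro q hq
    have h := chain_osc (ε := εd) (m := dA) (uf := eU) (base := κ) hd hmonoU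
      (vals_of_antitone hκ hmonoU) hq
    rw [sortDesc_eq_self hκ, hend_bot, ← hμU, hchv_bot q hq] at h
    exact h
  have hvalsR : ∀ a b, a ≤ b → b < cA →
      (εc = 1 → κU (eS b) ≤ κU (eS a)) ∧ (εc = -1 → κU (eS a) ≤ κU (eS b)) := by
    intro a b hab hb
    rcases eq_or_lt_of_le hab with rfl | hlt
    · exact ⟨fun _ => le_refl _, fun _ => le_refl _⟩
    have hmem : ∀ l, l < cA → (eS l ∈ S) := fun l hl => enum_mem εc S hr hl
    have hνK : ∀ l, l < cA → ν (eS l) = κU (eS l) + εc := by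
      intro l hl
      rw [hνeq (eS l), if_pos (hmem l hl), hκUdef]
      show _ = κ (eS l) + (if (eS l) ∈ U then εd else 0) + εc
      ring
    constructor
    · intro h
      have hord := (hmonoS a b hlt hb).1 h
      have := hν (le_of_lt hord)
      have e1 := hνK a (by omega)
      have e2 := hνK b hb
      omega
    · intro h
      have hord := (hmonoS a b hlt hb).2 h
      have := hν (le_of_lt hord)
      have e1 := hνK a (by omega)
      have e2 := hνK b hb
      omega
  have rightChain : ∀ p, p ≤ cA → oscStep μ ν p = F p dA := by
    intro p hp
    have h := chain_osc (ε := εc) (m := cA) (uf := eS) (base := κU) hc hmonoS hvalsR hp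
    rw [← hμU, hend_right, sortDesc_eq_self hν, hchv_right p hp] at h
    exact h
  -- antitone ν in explicit form
  have hν' : Antitone (fun i => κ i + (if i ∈ S then εc else 0) + (if i ∈ U then εd else 0)) := by
    have : (fun i => κ i + (if i ∈ S then εc else 0) + (if i ∈ U then εd else 0)) = ν :=
      funext (fun i => (hνeq i).symm)
    rw [this]; exact hν
  -- the grid induction
  have main : ∀ k, k ≤ cA → ∀ q, q ≤ dA → grid cA κ lam ν k q = F (cA - k) q := by
    intro k
    induction k with
    | zero =>
      intro _ q hq
      rw [grid, Nat.sub_zero]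
      exact topChain q hq
    | succ k ih =>
      intro hk q
      induction q with
      | zero =>
        intro _
        rw [grid]
        exact leftChain (cA - (k+1)) (by omega)
      | succ q ihq =>
        intro hq
        rw [grid]
        have e1 := ih (by omega) (q+1) hq
        have e2 := ihq (by omega)
        have e3 := ih (by omega) q (by omega)
        have hp1 : cA - k = (cA - (k+1)) + 1 := by omega
        rw [hp1] at e1 e3
        set p := cA - (k + 1) with hpdef
        have hplt : p < cA := by omega
        have hqlt : q < dA := by omega
        rw [e1, e2, e3]
        -- convert the (p+1)/(q+1) images to inserts
        have himSp : (Finset.range (p+1)).image eS = insert (eS p) ((Finset.range p).image eS) := by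
          rw [Finset.range_add_one, Finset.image_insert]
        have himUq : (Finset.range (q+1)).image eU = insert (eU q) ((Finset.range q).image eU) := by
          rw [Finset.range_add_one, Finset.image_insert]
        have hnmS : eS p ∉ (Finset.range p).image eS := by
          intro h
          obtain ⟨l, hl, hle⟩ := Finset.mem_image.mp h
          rw [Finset.mem_range] at hl
          have := hinjS l p (by omega) hplt hle
          omega
        have hnmU : eU q ∉ (Finset.range q).image eU := by
          intro h
          obtain ⟨l, hl, hle⟩ := Finset.mem_image.mp h
          rw [Finset.mem_range] at hl
          have := hinjU l q (by omega) hqlt hle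
          omega
        have hA : vIT κ εc εd ((Finset.range (p+1)).image eS) ((Finset.range (q+1)).image eU)
            = fun i' => (fun j => vIT κ εc εd ((Finset.range p).image eS)
                ((Finset.range q).image eU) j + bp εc (eS p) j) i' + bp εd (eU q) i' := by
          funext i'
          rw [himSp, himUq, vIT_insertQ _ _ _ _ _ hnmU, vIT_insertP _ _ _ _ _ hnmS]
        have hC : vIT κ εc εd ((Finset.range (p+1)).image eS) ((Finset.range q).image eU)
            = fun j => vIT κ εc εd ((Finset.range p).image eS)
                ((Finset.range q).image eU) j + bp εc (eS p) j := by
          funext j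
          rw [himSp, vIT_insertP _ _ _ _ _ hnmS]
        have hW : vIT κ εc εd ((Finset.range p).image eS) ((Finset.range (q+1)).image eU)
            = fun i' => vIT κ εc εd ((Finset.range p).image eS)
                ((Finset.range q).image eU) i' + bp εd (eU q) i' := by
          funext i'
          rw [himUq, vIT_insertQ _ _ _ _ _ hnmU]
        rw [hFdef]
        simp only
        rw [hA, hC, hW]
        exact interior hc hd κ S U ((Finset.range p).image eS) ((Finset.range q).image eU)
          (eS p) (eU q) (enum_mem εc S hr hplt) (enum_mem εd U hr hqlt) hκ hν'
          (fun i => enum_char εc S hr hc hplt i) (fun i => enum_char εd U hr hd hqlt i)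
  refine ⟨?_, ?_, ?_⟩
  · intro q hq
    rw [main cA le_rfl q hq, Nat.sub_self]
    exact (botChain q hq).symm
  · intro k hk
    rw [main k hk dA le_rfl]
    exact (rightChain (cA - k) (by omega)).symm
  · rw [main cA le_rfl dA le_rfl, Nat.sub_self, hμU]
    show sortDesc (vIT κ εc εd ((Finset.range 0).image eS) ((Finset.range dA).image eU))
        = sortDesc κU
    have harg : vIT κ εc εd ((Finset.range 0).image eS) ((Finset.range dA).image eU) = κU := by
      funext i
      show κ i + (if i ∈ (Finset.range 0).image eS then εc else 0)
          + (if i ∈ (Finset.range dA).image eU then εd else 0)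
          = κ i + (if i ∈ U then εd else 0)
      rw [himU]
      simp
    rw [harg]


end FT
end
end
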